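/- arXiv:2107.04273 — 8 statements merged into one kernel-verified Lean document; each statement's English description precedes it below -/
import Mathlib

section
/- Let R be a (not necessarily commutative) unital ring and let a, b be units of R such that (a − 1)² = 0 and (b − 1)² = 0. Set u := a·b (a unit of R). Then both a and b commute with u + u⁻¹, i.e. a·(u + u⁻¹) = (u + u⁻¹)·a and b·(u + u⁻¹) = (u + u⁻¹)·b. -/
/-!
Since `(a - 1)² = 0`, the inverse of `a` is `2 - a`, so `a + a⁻¹ = 2` is central, and likewise for
`b`. Whenever the traces `s = a + a⁻¹` and `t = b + b⁻¹` commute with `b` and `a` respectively,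
substituting `a⁻¹ = s - a` and `b⁻¹ = t - b` shows `ba + (ba)⁻¹ = ab + (ab)⁻¹`. As conjugation by `a`
carries `ba + (ba)⁻¹` to `ab + (ab)⁻¹`, and conjugation by `b` carries `ab + (ab)⁻¹` back to
`ba + (ba)⁻¹`, both `a` and `b` commute with `ab + (ab)⁻¹`.
-/

namespace Units

theorem semiconjBy_mul_add_inv_swap {R : Type*} [Semiring R] (a b : Rˣ) :
    SemiconjBy (a : R) (((b * a : Rˣ) : R) + (((b * a)⁻¹ : Rˣ) : R))
      (((a * b : Rˣ) : R) + (((a * b)⁻¹ : Rˣ) : R)) := by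
  simp only [SemiconjBy, val_mul, mul_inv_rev, mul_add, add_mul, mul_assoc, mul_inv_cancel_left,
    inv_mul, mul_one]

variable {R : Type*} [Ring R]

theorem inv_eq_two_sub_of_sub_one_mul_self_eq_zero {a : Rˣ}
    (ha : ((a : R) - 1) * ((a : R) - 1) = 0) : ((a⁻¹ : Rˣ) : R) = 2 - a := by
  refine Units.inv_eq_of_mul_eq_one_right ?_
  rw [← sub_eq_zero, ← neg_eq_zero, ← ha]
  noncomm_ring

theorem add_inv_eq_two_of_sub_one_mul_self_eq_zero {a : Rˣ}
    (ha : ((a : R) - 1) * ((a : R) - 1) = 0) : (a : R) + ((a⁻¹ : Rˣ) : R) = 2 := by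
  rw [inv_eq_two_sub_of_sub_one_mul_self_eq_zero ha, add_sub_cancel]

section CommuteAddInv

variable {a b : Rˣ} (ha : Commute ((a : R) + ((a⁻¹ : Rˣ) : R)) b)
  (hb : Commute ((b : R) + ((b⁻¹ : Rˣ) : R)) a)
include ha hb

theorem mul_add_inv_mul_comm_of_commute :
    ((b * a : Rˣ) : R) + (((b * a)⁻¹ : Rˣ) : R) = ((a * b : Rˣ) : R) + (((a * b)⁻¹ : Rˣ) : R) := by
  set s := (a : R) + ((a⁻¹ : Rˣ) : R) with hs
  set t := (b : R) + ((b⁻¹ : Rˣ) : R) with ht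
  have hst : Commute s t := ha.add_right ha.units_inv_right
  have ha_inv : ((a⁻¹ : Rˣ) : R) = s - a := by rw [hs]; abel
  have hb_inv : ((b⁻¹ : Rˣ) : R) = t - b := by rw [ht]; abel
  simp only [mul_inv_rev, val_mul, ha_inv, hb_inv, mul_sub, sub_mul]
  rw [hst.eq, ha.eq, hb.eq]
  abel

theorem commute_left_mul_add_inv_of_commute :
    Commute (a : R) (((a * b : Rˣ) : R) + (((a * b)⁻¹ : Rˣ) : R)) :=
  mul_add_inv_mul_comm_of_commute ha hb ▸ semiconjBy_mul_add_inv_swap a b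

theorem commute_right_mul_add_inv_of_commute :
    Commute (b : R) (((a * b : Rˣ) : R) + (((a * b)⁻¹ : Rˣ) : R)) :=
  mul_add_inv_mul_comm_of_commute ha hb ▸ semiconjBy_mul_add_inv_swap b a

end CommuteAddInv

end Units

/-- If a and b are unipotent units of index 2 of a ring and u = a·b,
then a and b commute with u + u⁻¹. -/
theorem unipotent_prod_commutes_with_add_inv
    (R : Type*) [Ring R] (a b u : Rˣ)
    (ha : ((a : R) - 1) * ((a : R) - 1) = 0)
    (hb : ((b : R) - 1) * ((b : R) - 1) = 0)
    (hu : u = a * b) :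
    (a : R) * ((u : R) + ((u⁻¹ : Rˣ) : R)) = ((u : R) + ((u⁻¹ : Rˣ) : R)) * (a : R) ∧
    (b : R) * ((u : R) + ((u⁻¹ : Rˣ) : R)) = ((u : R) + ((u⁻¹ : Rˣ) : R)) * (b : R) := by
  subst hu
  have ha_trace : Commute ((a : R) + ((a⁻¹ : Rˣ) : R)) b := by
    rw [Units.add_inv_eq_two_of_sub_one_mul_self_eq_zero ha]
    exact Commute.ofNat_left 2 _
  have hb_trace : Commute ((b : R) + ((b⁻¹ : Rˣ) : R)) a := by
    rw [Units.add_inv_eq_two_of_sub_one_mul_self_eq_zero hb]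
    exact Commute.ofNat_left 2 _
  exact ⟨Units.commute_left_mul_add_inv_of_commute ha_trace hb_trace,
    Units.commute_right_mul_add_inv_of_commute ha_trace hb_trace⟩
end

section
/- Let F be a field of characteristic different from 2, let V be an F-vector space, and let a be an endomorphism of V. Define the endomorphism b of V × V by b(x, y) = (a(x), −a(y)). Then b has the exchange property: there exist subspaces W₁, W₂ of V × V with V × V = W₁ ⊕ W₂, b(W₁) ⊆ W₂ and b(W₂) ⊆ W₁. -/
/-!
The swap `σ (x, y) = (y, x)` is an involution and `b` anticommutes with it. Since `2` is
invertible, `V × V` is the direct sum of the `±1`-eigenspaces of `σ` (the diagonal and the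
antidiagonal), and an operator anticommuting with `σ` maps each of them into the other.
-/

namespace Module.End

variable {R M : Type*} [CommRing R] [AddCommGroup M] [Module R M]

theorem map_eigenspace_le_eigenspace_neg {σ b : End R M} (hb : b * σ = -(σ * b)) (μ : R) :
    (σ.eigenspace μ).map b ≤ σ.eigenspace (-μ) := by
  rintro _ ⟨x, hx, rfl⟩
  rw [SetLike.mem_coe, mem_eigenspace_iff] at hx
  rw [mem_eigenspace_iff]
  have hbσ : b (σ x) = -σ (b x) := congr($hb x)
  rw [neg_smul, ← map_smul, ← hx, hbσ, neg_neg]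

theorem isCompl_eigenspace_one_neg_one {σ : End R M} (hσ : σ * σ = 1) (h2 : IsUnit (2 : R)) :
    IsCompl (σ.eigenspace 1) (σ.eigenspace (-1)) := by
  obtain ⟨c, hc⟩ : ∃ c : R, c * 2 = 1 := ⟨↑h2.unit⁻¹, h2.val_inv_mul⟩
  constructor
  · rw [Submodule.disjoint_def]
    intro x hx₁ hx₂
    rw [mem_eigenspace_iff, one_smul] at hx₁
    rw [mem_eigenspace_iff, neg_one_smul, hx₁] at hx₂
    calc x = (c * 2) • x := by rw [hc, one_smul]
      _ = 0 := by rw [mul_smul, two_smul, add_eq_zero_iff_eq_neg.mpr hx₂, smul_zero]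
  · rw [codisjoint_iff_le_sup]
    intro x _
    have hσx : σ (σ x) = x := congr($hσ x)
    refine Submodule.mem_sup.mpr ⟨c • (x + σ x), ?_, c • (x - σ x), ?_, ?_⟩
    · simp [hσx, add_comm]
    · simp [hσx, ← smul_neg]
    · rw [← smul_add, add_add_sub_cancel, ← two_smul R, smul_smul, hc, one_smul]

end Module.End

/-- Over a field of characteristic ≠ 2, the block-diagonal operator
(x, y) ↦ (a x, -a y) on V × V has the exchange property. -/
theorem diag_neg_diag_exchange
    (F V : Type*) [Field F] [AddCommGroup V] [Module F V]
    (hchar : (2 : F) ≠ 0)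
    (a : Module.End F V) (b : Module.End F (V × V))
    (hb : ∀ x y : V, b (x, y) = (a x, - a y)) :
    ∃ W₁ W₂ : Submodule F (V × V), IsCompl W₁ W₂ ∧
      Submodule.map b W₁ ≤ W₂ ∧ Submodule.map b W₂ ≤ W₁ := by
  let σ : Module.End F (V × V) := LinearEquiv.prodComm F V V
  have hσ : σ * σ = 1 := LinearMap.ext fun _ => rfl
  have hbσ : b * σ = -(σ * b) := LinearMap.ext fun ⟨x, y⟩ => by simp [σ, hb]
  refine ⟨σ.eigenspace 1, σ.eigenspace (-1),
    Module.End.isCompl_eigenspace_one_neg_one hσ hchar.isUnit,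
    Module.End.map_eigenspace_le_eigenspace_neg hbσ 1, ?_⟩
  simpa only [neg_neg] using Module.End.map_eigenspace_le_eigenspace_neg hbσ (-1)
end

section
/- Let A be a unital ring and let a be a unit of A. Then the 2×2 matrix B = [[a, 0], [0, a⁻¹]] over A is the product of two involutory matrices of Mat₂(A) (matrices S with S² = I). Moreover, if a² − 1 is a unit of A, then B is also the product of two unipotent matrices of index 2 of Mat₂(A) (matrices T with (T − I)² = 0). -/
/-!
`diag(a, a⁻¹)` is the involution `!![0, a; a⁻¹, 0]` times the swap `!![0, 1; 1, 0]`.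

For the unipotent factorisation, `a² - 1 = (a + 1)(a - 1)` with commuting factors, so `a + 1`
is a unit and `x = (a + 1)⁻¹(a - 1)` commutes with `a`. With `N = !![1, 1; -1, -1]`, `N² = 0`,
the matrix `T = 1 + x • N` is unipotent with inverse `1 - x • N`, and the relation
`(a + 1) x = a - 1` makes `diag(a, a⁻¹) T⁻¹` equal to `1 + x • !![1, -a; a⁻¹, -1]`,
which is unipotent as well.
-/

theorem exists_commute_add_one_mul_eq_sub_one {A : Type*} [Ring A] {c : A}
    (h : IsUnit (c * c - 1)) : ∃ x : A, Commute x c ∧ (c + 1) * x = c - 1 := by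
  have hc₁ : Commute (c + 1) c := (Commute.refl c).add_left (.one_left c)
  have hc₂ : Commute (c - 1) c := (Commute.refl c).sub_left (.one_left c)
  have hfac : c * c - 1 = (c + 1) * (c - 1) := by noncomm_ring
  obtain ⟨u, hu⟩ := ((hc₁.sub_right (.one_right _)).isUnit_mul_iff.1 (hfac ▸ h)).1
  exact ⟨↑u⁻¹ * (c - 1), (hu ▸ hc₁).units_inv_left.mul_left hc₂,
    by rw [← hu, Units.mul_inv_cancel_left]⟩

namespace Matrix

variable {A : Type*} [Ring A]

theorem smul_mul_smul_of_commute {n : Type*} [Fintype n] {x : A} {M N : Matrix n n A}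
    (hx : ∀ i j, Commute x (M i j)) : (x • M) * (x • N) = (x * x) • (M * N) := by
  ext i j
  simp only [mul_apply, smul_apply, smul_eq_mul, Finset.mul_sum]
  refine Finset.sum_congr rfl fun k _ => ?_
  rw [mul_assoc, ← mul_assoc (M i k), ← (hx i k).eq, mul_assoc, mul_assoc]

theorem antidiag_fin_two_mul_self_eq_one {c b : A} (hcb : c * b = 1) (hbc : b * c = 1) :
    !![0, c; b, 0] * !![0, c; b, 0] = 1 := by
  simp [one_fin_two, hcb, hbc]

theorem fin_two_mul_self_eq_zero {c b : A} (hcb : c * b = -1) (hbc : b * c = -1) :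
    !![1, c; b, -1] * !![1, c; b, -1] = 0 := by
  ext i j
  fin_cases i <;> fin_cases j <;> simp [hcb, hbc]

theorem smul_fin_two_mul_self_eq_zero {c b x : A} (hcb : c * b = -1) (hbc : b * c = -1)
    (hxc : Commute x c) (hxb : Commute x b) :
    (x • !![1, c; b, -1]) * (x • !![1, c; b, -1]) = 0 := by
  have hx : ∀ i j, Commute x (!![1, c; b, -1] i j) := by
    intro i j
    fin_cases i <;> fin_cases j <;> simp [hxc, hxb]
  rw [smul_mul_smul_of_commute hx, fin_two_mul_self_eq_zero hcb hbc, smul_zero]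

theorem diag_fin_two_eq_one_add_smul_mul_one_add_smul {c b x : A} (hbc : b * c = 1)
    (hxc : Commute x c) (hxb : Commute x b) (hx : (c + 1) * x = c - 1) :
    !![c, 0; 0, b] = (1 + x • !![1, -c; b, -1]) * (1 + x • !![1, 1; -1, -1]) := by
  set P := x • !![(1 : A), 1; -1, -1]
  have hP : P * P = 0 :=
    smul_fin_two_mul_self_eq_zero (one_mul _) (mul_one _) (.one_right x) (.neg_one_right x)
  have hPinv : (1 - P) * (1 + P) = 1 := by
    rw [sub_mul, one_mul, mul_add, mul_one, hP, add_zero, add_sub_cancel_right]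
  have hS : 1 + x • !![1, -c; b, -1] = !![c, 0; 0, b] * (1 - P) := by
    have h₁ : 1 + x = c - c * x := by linear_combination (norm := noncomm_ring) hx
    have h₂ : 1 + -x = b * (1 + x) := by
      rw [h₁, mul_sub, ← mul_assoc, hbc, one_mul, sub_eq_add_neg]
    ext i j
    fin_cases i <;> fin_cases j <;> simp [P, one_fin_two, mul_sub, hxc.eq, hxb.eq, h₁, h₂]
  rw [hS, mul_assoc, hPinv, mul_one]

end Matrix

open Matrix in
/-- The matrix diag(a, a⁻¹) is the product of two involutory 2×2 matrices; and
if a² - 1 is a unit, it is also the product of two unipotent matrices of index 2. -/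
theorem diag_unit_inv_prod_two_involutions_and_unipotents
    (A : Type*) [Ring A] (a : Aˣ) :
    (∃ S T : Matrix (Fin 2) (Fin 2) A, S * S = 1 ∧ T * T = 1 ∧
        !![(a : A), 0; 0, ((a⁻¹ : Aˣ) : A)] = S * T) ∧
    (IsUnit ((a : A) * (a : A) - 1) →
      ∃ S T : Matrix (Fin 2) (Fin 2) A, (S - 1) * (S - 1) = 0 ∧ (T - 1) * (T - 1) = 0 ∧
        !![(a : A), 0; 0, ((a⁻¹ : Aˣ) : A)] = S * T) := by
  refine ⟨⟨!![0, (a : A); ↑a⁻¹, 0], !![0, 1; 1, 0],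
    antidiag_fin_two_mul_self_eq_one a.mul_inv a.inv_mul,
    antidiag_fin_two_mul_self_eq_one (one_mul 1) (one_mul 1), by simp⟩, fun h => ?_⟩
  obtain ⟨x, hxa, hx⟩ := exists_commute_add_one_mul_eq_sub_one h
  have hxa' : Commute x ↑a⁻¹ := hxa.units_inv_right
  refine ⟨_, _, ?_, ?_, diag_fin_two_eq_one_add_smul_mul_one_add_smul a.inv_mul hxa hxa' hx⟩
  · rw [add_sub_cancel_left]
    exact smul_fin_two_mul_self_eq_zero (by simp) (by simp) hxa.neg_right hxa'
  · rw [add_sub_cancel_left]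
    exact smul_fin_two_mul_self_eq_zero (one_mul _) (mul_one _) (.one_right x) (.neg_one_right x)
end

section
/- Let A be a unital ring and let a ∈ A. Then the 2×2 matrix B = [[0, −1], [1, a]] over A is the product of two involutory matrices of Mat₂(A) (matrices S with S² = I), and it is also the product of two unipotent matrices of index 2 of Mat₂(A) (matrices T with (T − I)² = 0). -/
/-!
`!![0, -1; 1, a]` is the swap matrix times the reflection `!![1, a; 0, -1]`, both of order two.
For the unipotent factorization, multiplying a companion matrix `!![0, -1; 1, b]` on the left by
the transvection `!![1, 0; c, 1]` shifts `b` by `-c`; starting from `b = 2`, where the companion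
matrix minus `1` is the square-zero matrix `!![-1, -1; 1, 1]`, and taking `c = 2 - a` gives the
second factorization.
-/

namespace Matrix

section Involutions

theorem swap_fin_two_mul_self {R : Type*} [NonAssocSemiring R] :
    !![(0 : R), 1; 1, 0] * !![(0 : R), 1; 1, 0] = 1 := by
  rw [one_fin_two, mul_fin_two]
  simp

variable {R : Type*} [Ring R]

theorem upperReflection_fin_two_mul_self (b : R) :
    !![1, b; 0, -1] * !![1, b; 0, -1] = 1 := by
  rw [one_fin_two, mul_fin_two]
  simp

theorem companion_fin_two_eq_swap_mul_upperReflection (b : R) :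
    !![0, -1; 1, b] = !![0, 1; 1, 0] * !![1, b; 0, -1] := by
  rw [mul_fin_two]
  simp

end Involutions

section Unipotents

variable {R : Type*} [Ring R]

theorem lowerTransvection_fin_two_sub_one_mul_self (c : R) :
    (!![1, 0; c, 1] - 1) * (!![1, 0; c, 1] - 1) = 0 := by
  rw [one_fin_two]
  ext i j
  fin_cases i <;> fin_cases j <;> simp [mul_apply]

theorem companion_fin_two_two_sub_one_mul_self :
    (!![0, -1; 1, 2] - 1) * (!![0, -1; 1, 2] - 1 : Matrix (Fin 2) (Fin 2) R) = 0 := by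
  rw [one_fin_two]
  ext i j
  fin_cases i <;> fin_cases j <;> simp [mul_apply] <;> norm_num

theorem lowerTransvection_mul_companion_fin_two (b c : R) :
    !![1, 0; c, 1] * !![0, -1; 1, b] = !![0, -1; 1, b - c] := by
  rw [mul_fin_two]
  simp [sub_eq_add_neg, add_comm]

end Unipotents

end Matrix

open Matrix in
/-- The companion-type matrix [[0, -1], [1, a]] is both the product of two
involutory 2×2 matrices and the product of two unipotent matrices of index 2. -/
theorem companion_prod_two_involutions_and_unipotents
    (A : Type*) [Ring A] (a : A) :
    (∃ S T : Matrix (Fin 2) (Fin 2) A, S * S = 1 ∧ T * T = 1 ∧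
        !![(0 : A), -1; 1, a] = S * T) ∧
    (∃ S T : Matrix (Fin 2) (Fin 2) A, (S - 1) * (S - 1) = 0 ∧ (T - 1) * (T - 1) = 0 ∧
        !![(0 : A), -1; 1, a] = S * T) := by
  refine ⟨⟨_, _, swap_fin_two_mul_self, upperReflection_fin_two_mul_self a,
      companion_fin_two_eq_swap_mul_upperReflection a⟩,
    ⟨_, _, lowerTransvection_fin_two_sub_one_mul_self (2 - a),
      companion_fin_two_two_sub_one_mul_self, ?_⟩⟩
  rw [lowerTransvection_mul_companion_fin_two, sub_sub_cancel]
end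

section
/- Let F be a field, let V be an F-vector space, and let u be a bijective endomorphism of V such that u = a + b for endomorphisms a, b of V with a² = 0 and b² = 0. Then V = ker a ⊕ ker b (internal direct sum), the range of a equals ker a, and the range of b equals ker b. -/
/-!
Since `a² = b² = 0`, the ranges of `a` and `b` lie in their kernels. Injectivity of `u = a + b`
makes `ker a ⊓ ker b = ⊥`, and surjectivity gives `V = range u ≤ range a ⊔ range b ≤ ker a ⊔ ker b`.
For `x = u y ∈ ker a` we get `a (b y) = a x = 0`, so `b y ∈ ker a ⊓ ker b = ⊥`, whence `x = a y`.
-/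

namespace LinearMap

variable {R M : Type*} [Semiring R] [AddCommMonoid M] [Module R M] {a b : Module.End R M}

theorem range_le_ker_of_mul_self_eq_zero (ha : a * a = 0) : range a ≤ ker a :=
  range_le_ker_iff.mpr ha

theorem disjoint_ker_of_injective_add (hinj : Function.Injective (a + b)) :
    Disjoint (ker a) (ker b) := by
  rw [disjoint_iff_inf_le]
  rintro x ⟨hax, hbx⟩
  exact hinj (by simp_all)

theorem codisjoint_ker_of_surjective_add (hsurj : Function.Surjective (a + b))
    (ha : a * a = 0) (hb : b * b = 0) : Codisjoint (ker a) (ker b) := by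
  rw [codisjoint_iff, eq_top_iff, ← range_eq_top.mpr hsurj]
  exact (range_add_le a b).trans
    (sup_le_sup (range_le_ker_of_mul_self_eq_zero ha) (range_le_ker_of_mul_self_eq_zero hb))

theorem range_eq_ker_of_bijective_add (hbij : Function.Bijective (a + b))
    (ha : a * a = 0) (hb : b * b = 0) : range a = ker a := by
  refine (range_le_ker_of_mul_self_eq_zero ha).antisymm fun x hx => ?_
  obtain ⟨y, rfl⟩ := hbij.surjective x
  have hby : b y ∈ ker a ⊓ ker b := by
    constructor
    · simpa [mem_ker, ← Module.End.mul_apply, ha] using hx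
    · exact range_le_ker_of_mul_self_eq_zero hb (mem_range_self b y)
  rw [(disjoint_ker_of_injective_add hbij.injective).eq_bot, Submodule.mem_bot] at hby
  exact ⟨y, by simp [hby]⟩

end LinearMap

/-- If a bijective endomorphism u is the sum of two square-zero endomorphisms
a and b, then V = ker a ⊕ ker b, range a = ker a and range b = ker b. -/
theorem bijective_sum_two_square_zero_ker_compl
    (F V : Type*) [Field F] [AddCommGroup V] [Module F V]
    (u a b : Module.End F V)
    (hbij : Function.Bijective u)
    (ha : a * a = 0) (hb : b * b = 0) (hu : u = a + b) :
    IsCompl (LinearMap.ker a) (LinearMap.ker b) ∧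
      LinearMap.range a = LinearMap.ker a ∧
      LinearMap.range b = LinearMap.ker b := by
  subst hu
  have hbij' : Function.Bijective (b + a) := add_comm a b ▸ hbij
  exact ⟨⟨LinearMap.disjoint_ker_of_injective_add hbij.injective,
      LinearMap.codisjoint_ker_of_surjective_add hbij.surjective ha hb⟩,
    LinearMap.range_eq_ker_of_bijective_add hbij ha hb,
    LinearMap.range_eq_ker_of_bijective_add hbij' hb ha⟩
end

section
/- Let F be a field, let V be an F-vector space of countable dimension, and let u be a locally nilpotent endomorphism of V. Then u has the exchange property: there exist subspaces V₁, V₂ of V with V = V₁ ⊕ V₂, u(V₁) ⊆ V₂ and u(V₂) ⊆ V₁. -/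
/-!
Let `V^α = ⋂_{β < α} u (V^β)` and let `h x` be the largest `α` with `x ∈ V^α`, or `⊤` if `x` lies
in all of them. Call finite-dimensional `A, B` with `A ∩ B = 0`, `u A ⊆ B`, `u B ⊆ A` an exchange
pair if moreover `h (a + b) = min (h a) (h b)`. Walking through a countable basis, it suffices to
absorb any vector `x` into a larger exchange pair, and by local nilpotence we may assume
`u x ∈ A ⊕ B`. Replace `x` by an element of maximal height `α` in `x + A ⊕ B` and write
`u x = a + b`. If `u y = b + u a₂` with `a₂ ∈ A`, `h y, h a₂ ≥ α`, and `y` has maximal height in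
`y + (A ⊕ B ⊕ F x)`, then `y` can be adjoined to `A` and afterwards `x - y + a₂` to `B`.
Such a `y` is found by raising its height as long as it is not maximal, since heights on a
finite-dimensional space take finitely many values. A cancellation against `x` itself can only
occur when `a ∈ V^(α+2) + u (B ∩ V^α)`; in that case the roles of `A` and `B` are exchanged and
`y` is taken of height at least `α + 1`, which rules the cancellation out.
-/

open Submodule Order

universe v

section

variable {F : Type*} {V : Type v} {Γ : Type*} [Field F] [AddCommGroup V] [Module F V]
  [LinearOrder Γ]

theorem Submodule.mem_sup_span_singleton_iff {p : Submodule F V} {y z : V} :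
    z ∈ p ⊔ span F {y} ↔ ∃ m ∈ p, ∃ t : F, z = m + t • y := by
  simp only [mem_sup, mem_span_singleton]
  constructor
  · rintro ⟨m, hm, _, ⟨t, rfl⟩, rfl⟩
    exact ⟨m, hm, t, rfl⟩
  · rintro ⟨m, hm, t, rfl⟩
    exact ⟨m, hm, _, ⟨t, rfl⟩, rfl⟩

def IsMaxOnCoset (h : V → Γ) (N : Submodule F V) (y : V) : Prop :=
  ∀ n ∈ N, h (y + n) ≤ h y

theorem IsMaxOnCoset.mono {h : V → Γ} {M N : Submodule F V} {y : V}
    (hy : IsMaxOnCoset h N y) (hMN : M ≤ N) : IsMaxOnCoset h M y :=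
  fun n hn => hy n (hMN hn)

section OrderTop

variable [OrderTop Γ]

variable (F) in
structure IsVectorValuation (h : V → Γ) : Prop where
  map_zero : h 0 = ⊤
  min_le_map_add (x y : V) : min (h x) (h y) ≤ h (x + y)
  le_map_smul (c : F) (x : V) : h x ≤ h (c • x)

namespace IsVectorValuation

variable {h : V → Γ}

theorem map_smul_of_ne_zero (hv : IsVectorValuation F h) {c : F} (hc : c ≠ 0) (x : V) :
    h (c • x) = h x :=
  le_antisymm (by simpa [inv_smul_smul₀ hc] using hv.le_map_smul c⁻¹ (c • x))
    (hv.le_map_smul c x)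

theorem map_neg (hv : IsVectorValuation F h) (x : V) : h (-x) = h x := by
  simpa using hv.map_smul_of_ne_zero (neg_ne_zero.2 (one_ne_zero' F)) x

theorem min_le_map_sub (hv : IsVectorValuation F h) (x y : V) :
    min (h x) (h y) ≤ h (x - y) := by
  simpa [sub_eq_add_neg, hv.map_neg] using hv.min_le_map_add x (-y)

theorem map_add_of_lt (hv : IsVectorValuation F h) {x y : V} (hxy : h x < h y) :
    h (x + y) = h x := by
  refine le_antisymm ?_ ((min_eq_left hxy.le).ge.trans (hv.min_le_map_add x y))
  rcases min_le_iff.1 (by simpa using hv.min_le_map_sub (x + y) y) with hle | hle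
  · exact hle
  · exact absurd hle hxy.not_ge

theorem map_eq_of_lt_map_add (hv : IsVectorValuation F h) {y n : V} (hlt : h y < h (y + n)) :
    h n = h y := by
  rcases lt_trichotomy (h n) (h y) with hny | hny | hny
  · rw [add_comm, hv.map_add_of_lt hny] at hlt
    exact absurd hlt hny.not_gt
  · exact hny
  · rw [hv.map_add_of_lt hny] at hlt
    exact absurd hlt (lt_irrefl _)

def levelSubmodule (hv : IsVectorValuation F h) (γ : Γ) : Submodule F V where
  carrier := {x | γ ≤ h x}
  add_mem' hx hy := (le_min hx hy).trans (hv.min_le_map_add _ _)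
  zero_mem' := by simp [hv.map_zero]
  smul_mem' c _ hx := hx.trans (hv.le_map_smul c _)

theorem finite_image (hv : IsVectorValuation F h) (N : Submodule F V) [FiniteDimensional F N] :
    (h '' N).Finite := by
  let d : Γ → ℕ := fun γ => Module.finrank F ↥(N ⊓ hv.levelSubmodule γ)
  have hd : StrictAntiOn d (h '' N) := by
    rintro _ ⟨ζ, hζ, rfl⟩ _ ⟨ζ', -, rfl⟩ hlt
    refine Submodule.finrank_lt_finrank_of_lt (lt_of_le_of_ne
      (inf_le_inf_left _ fun x (hx : h ζ' ≤ h x) => hlt.le.trans hx) fun heq => ?_)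
    have hmem : ζ ∈ N ⊓ hv.levelSubmodule (h ζ) := ⟨hζ, le_refl (h ζ)⟩
    exact hlt.not_ge (heq ▸ hmem).2
  refine Set.Finite.of_finite_image ((Set.finite_Iic (Module.finrank F N)).subset ?_) hd.injOn
  rintro _ ⟨γ, -, rfl⟩
  exact Submodule.finrank_mono inf_le_left

theorem exists_isMaxOnCoset_add (hv : IsVectorValuation F h) (N : Submodule F V)
    [FiniteDimensional F N] (x : V) : ∃ m ∈ N, IsMaxOnCoset h N (x + m) := by
  have hfin : ((fun m => h (x + m)) '' N).Finite := by
    refine (hv.finite_image (N ⊔ span F {x})).subset ?_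
    rintro _ ⟨m, hm, rfl⟩
    exact ⟨x + m, add_mem (mem_sup_right (mem_span_singleton_self x)) (mem_sup_left hm), rfl⟩
  obtain ⟨_, ⟨m, hm, rfl⟩, hmax⟩ := Set.exists_max_image _ id hfin ⟨_, 0, N.zero_mem, rfl⟩
  exact ⟨m, hm, fun n hn => hmax _ ⟨m + n, N.add_mem hm hn, by rw [add_assoc]⟩⟩

theorem exists_isMaxOnCoset_of_exists_lt (hv : IsVectorValuation F h) (N : Submodule F V)
    [FiniteDimensional F N] {S : Set V} (hS : S.Nonempty)
    (hstep : ∀ y ∈ S, ¬IsMaxOnCoset h N y → ∃ y' ∈ S, h y < h y') :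
    ∃ y ∈ S, IsMaxOnCoset h N y := by
  by_contra! hnone
  have hsub : h '' S ⊆ h '' N := by
    rintro _ ⟨y, hy, rfl⟩
    obtain ⟨n, hn, hlt⟩ : ∃ n ∈ N, h y < h (y + n) := by
      simpa [IsMaxOnCoset] using hnone y hy
    exact ⟨n, hn, hv.map_eq_of_lt_map_add hlt⟩
  obtain ⟨_, ⟨y, hy, rfl⟩, hmax⟩ :=
    Set.exists_max_image _ id ((hv.finite_image N).subset hsub) (hS.image h)
  obtain ⟨y', hy', hlt⟩ := hstep y hy (hnone y hy)
  exact (hmax _ ⟨y', hy', rfl⟩).not_gt hlt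

end IsVectorValuation

namespace IsMaxOnCoset

variable {h : V → Γ} {N : Submodule F V} {y : V}

theorem map_add (hv : IsVectorValuation F h) (hy : IsMaxOnCoset h N y) {n : V} (hn : n ∈ N) :
    h (y + n) = min (h y) (h n) := by
  rcases lt_or_ge (h n) (h y) with hlt | hle
  · rw [add_comm, hv.map_add_of_lt hlt, min_eq_right hlt.le]
  · rw [min_eq_left hle]
    exact le_antisymm (hy n hn) ((le_min le_rfl hle).trans (hv.min_le_map_add y n))

theorem smul (hv : IsVectorValuation F h) (hy : IsMaxOnCoset h N y) (c : F) :
    IsMaxOnCoset h N (c • y) := by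
  intro n hn
  by_cases hc : c = 0
  · simp [hc, hv.map_zero]
  · rw [show c • y + n = c • (y + c⁻¹ • n) by rw [smul_add, smul_inv_smul₀ hc],
      hv.map_smul_of_ne_zero hc, hv.map_smul_of_ne_zero hc]
    exact hy _ (N.smul_mem _ hn)

end IsMaxOnCoset

end OrderTop

structure IsExchangePair (u : Module.End F V) (h : V → Γ) (A B : Submodule F V) : Prop where
  finiteDimensional_left : FiniteDimensional F A
  finiteDimensional_right : FiniteDimensional F B
  disjoint : Disjoint A B
  map_left_le : A.map u ≤ B
  map_right_le : B.map u ≤ A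
  map_add_eq_min : ∀ a ∈ A, ∀ b ∈ B, h (a + b) = min (h a) (h b)

namespace IsExchangePair

variable {u : Module.End F V} {h : V → Γ} {A B : Submodule F V}

theorem symm (hP : IsExchangePair u h A B) : IsExchangePair u h B A where
  finiteDimensional_left := hP.finiteDimensional_right
  finiteDimensional_right := hP.finiteDimensional_left
  disjoint := hP.disjoint.symm
  map_left_le := hP.map_right_le
  map_right_le := hP.map_left_le
  map_add_eq_min b hb a ha := by rw [add_comm, hP.map_add_eq_min a ha b hb, min_comm]

theorem bot : IsExchangePair u h ⊥ ⊥ where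
  finiteDimensional_left := inferInstance
  finiteDimensional_right := inferInstance
  disjoint := disjoint_bot_left
  map_left_le := by simp
  map_right_le := by simp
  map_add_eq_min a ha b hb := by simp_all

theorem map_add_le_left (hP : IsExchangePair u h A B) {a b : V} (ha : a ∈ A) (hb : b ∈ B) :
    h (a + b) ≤ h a :=
  (hP.map_add_eq_min a ha b hb).trans_le (min_le_left _ _)

theorem map_add_le_right (hP : IsExchangePair u h A B) {a b : V} (ha : a ∈ A) (hb : b ∈ B) :
    h (a + b) ≤ h b :=
  (hP.map_add_eq_min a ha b hb).trans_le (min_le_right _ _)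

theorem map_sup_le (hP : IsExchangePair u h A B) : (A ⊔ B).map u ≤ A ⊔ B := by
  rw [Submodule.map_sup]
  exact sup_le (hP.map_left_le.trans le_sup_right) (hP.map_right_le.trans le_sup_left)

theorem finiteDimensional_sup (hP : IsExchangePair u h A B) : FiniteDimensional F ↥(A ⊔ B) :=
  have := hP.finiteDimensional_left
  have := hP.finiteDimensional_right
  inferInstance

end IsExchangePair

variable [OrderTop Γ]

namespace IsExchangePair

variable {u : Module.End F V} {h : V → Γ} {A B : Submodule F V}

theorem exists_sup_span_left (hv : IsVectorValuation F h) (hP : IsExchangePair u h A B)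
    {y : V} (huy : u y ∈ B) (hy : IsMaxOnCoset h (A ⊔ B) y) :
    ∃ A', A ≤ A' ∧ IsExchangePair u h A' B ∧ A' ⊔ B = A ⊔ B ⊔ span F {y} := by
  by_cases hyM : y ∈ A ⊔ B
  · exact ⟨A, le_rfl, hP, by rwa [left_eq_sup, span_singleton_le_iff_mem]⟩
  refine ⟨A ⊔ span F {y}, le_sup_left, ?_, sup_right_comm _ _ _⟩
  have := hP.finiteDimensional_left
  refine ⟨inferInstance, hP.finiteDimensional_right, ?_, ?_,
    hP.map_right_le.trans le_sup_left, ?_⟩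
  · rw [disjoint_def]
    intro z hzA hzB
    obtain ⟨a, ha, s, rfl⟩ := mem_sup_span_singleton_iff.1 hzA
    obtain rfl : s = 0 := by
      by_contra hs
      refine hyM ?_
      have : s • y ∈ A ⊔ B := by
        simpa using sub_mem (mem_sup_right hzB) (mem_sup_left ha : a ∈ A ⊔ B)
      simpa [hs] using smul_mem _ s⁻¹ this
    rw [zero_smul, add_zero] at hzB ⊢
    exact disjoint_def.1 hP.disjoint a ha hzB
  · rw [Submodule.map_sup, map_span, Set.image_singleton]
    exact sup_le hP.map_left_le ((span_singleton_le_iff_mem _ _).2 huy)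
  · intro z hz b hb
    obtain ⟨a, ha, s, rfl⟩ := mem_sup_span_singleton_iff.1 hz
    have hab : a + b ∈ A ⊔ B := add_mem (mem_sup_left ha) (mem_sup_right hb)
    calc h (a + s • y + b) = h (s • y + (a + b)) := by abel_nf
      _ = min (h (s • y)) (min (h a) (h b)) := by
        rw [(hy.smul hv s).map_add hv hab, hP.map_add_eq_min a ha b hb]
      _ = min (h (a + s • y)) (h b) := by
        rw [add_comm a, (hy.smul hv s).map_add hv (mem_sup_left ha), min_assoc]

theorem exists_sup_span_right (hv : IsVectorValuation F h) (hP : IsExchangePair u h A B)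
    {w : V} (huw : u w ∈ A) (hw : IsMaxOnCoset h (A ⊔ B) w) :
    ∃ B', B ≤ B' ∧ IsExchangePair u h A B' ∧ A ⊔ B' = A ⊔ B ⊔ span F {w} := by
  obtain ⟨B', hBB', hP', hsup⟩ := hP.symm.exists_sup_span_left hv huw (sup_comm A B ▸ hw)
  exact ⟨B', hBB', hP'.symm, by rw [sup_comm, hsup, sup_comm B]⟩

theorem exists_mem_sup_of_isMaxOnCoset_lift (hv : IsVectorValuation F h)
    (hP : IsExchangePair u h A B) {x a b y a₂ : V} (hx : IsMaxOnCoset h (A ⊔ B) x)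
    (hux : u x = a + b) (ha : a ∈ A) (hb : b ∈ B) (ha₂ : a₂ ∈ A) (hxa₂ : h x ≤ h a₂)
    (hyu : u y = b + u a₂) (hxy : h x ≤ h y) (hy : IsMaxOnCoset h (A ⊔ B ⊔ span F {x}) y) :
    ∃ A' B', IsExchangePair u h A' B' ∧ A ≤ A' ∧ B ≤ B' ∧ x ∈ A' ⊔ B' := by
  have huy : u y ∈ B := hyu ▸ add_mem hb (hP.map_left_le (mem_map_of_mem ha₂))
  obtain ⟨A₁, hAA₁, hP₁, hsup₁⟩ := hP.exists_sup_span_left hv huy (hy.mono le_sup_left)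
  have huw : u (x - y + a₂) ∈ A := by
    rw [map_add, map_sub, hux, hyu]
    convert ha using 1
    abel
  have hw : IsMaxOnCoset h (A₁ ⊔ B) (x - y + a₂) := by
    rw [hsup₁]
    intro n hn
    obtain ⟨m, hm, s, rfl⟩ := mem_sup_span_singleton_iff.1 hn
    have hm' : a₂ + m ∈ A ⊔ B := add_mem (mem_sup_left ha₂) hm
    have hxm : x + (a₂ + m) ∈ A ⊔ B ⊔ span F {x} :=
      add_mem (mem_sup_right (mem_span_singleton_self x)) (mem_sup_left hm')
    calc h (x - y + a₂ + (m + s • y)) = h ((s - 1) • y + (x + (a₂ + m))) := by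
          rw [sub_smul, one_smul]; abel_nf
      _ ≤ h (x + (a₂ + m)) := ((hy.smul hv _).map_add hv hxm).trans_le (min_le_right _ _)
      _ ≤ h x := hx _ hm'
      _ ≤ h (x - y + a₂) :=
          (le_min ((le_min le_rfl hxy).trans (hv.min_le_map_sub x y)) hxa₂).trans
            (hv.min_le_map_add _ _)
  obtain ⟨B₂, hBB₂, hP₂, hsup₂⟩ := hP₁.exists_sup_span_right hv (hAA₁ huw) hw
  refine ⟨A₁, B₂, hP₂, hAA₁, hBB₂, ?_⟩
  rw [hsup₂, hsup₁]
  convert sub_mem (add_mem (mem_sup_right (mem_span_singleton_self _))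
    (mem_sup_left (mem_sup_right (mem_span_singleton_self _))))
    (mem_sup_left (mem_sup_left (mem_sup_left ha₂))) using 1
  abel

end IsExchangePair

variable [SuccOrder Γ]

structure IsHeight (u : Module.End F V) (h : V → Γ) : Prop extends IsVectorValuation F h where
  succ_le_map_apply (x : V) : succ (h x) ≤ h (u x)
  exists_apply_eq_of_succ_le {γ : Γ} {z : V} : succ γ ≤ h z → ∃ c, γ ≤ h c ∧ u c = z

namespace IsExchangePair

variable {u : Module.End F V} {h : V → Γ} {A B : Submodule F V}

theorem exists_lt_of_lt_map_add (hh : IsHeight u h) (hP : IsExchangePair u h A B)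
    {α : Γ} {b y a₂ m : V} (hb : b ∈ B) (ha₂ : a₂ ∈ A) (hαa₂ : α ≤ h a₂)
    (hyu : u y = b + u a₂) (hαy : α ≤ h y) (hm : m ∈ A ⊔ B) (hlt : h y < h (y + m)) :
    ∃ y', h y < h y' ∧ ∃ a₂' ∈ A, α ≤ h a₂' ∧ u y' = b + u a₂' := by
  obtain ⟨mA, hmA, mB, hmB, rfl⟩ := mem_sup.1 hm
  have hymA : h y ≤ h mA :=
    (hh.map_eq_of_lt_map_add hlt).ge.trans (hP.map_add_le_left hmA hmB)
  have humB : succ (succ (h y)) ≤ h (u mB) :=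
    calc succ (succ (h y)) ≤ succ (h (y + (mA + mB))) := succ_le_succ (succ_le_of_lt hlt)
      _ ≤ h (u (y + (mA + mB))) := hh.succ_le_map_apply _
      _ = h (u mB + (b + u (a₂ + mA))) := by simp only [map_add, hyu]; abel_nf
      _ ≤ h (u mB) := hP.map_add_le_left (hP.map_right_le (mem_map_of_mem hmB))
          (add_mem hb (hP.map_left_le (mem_map_of_mem (add_mem ha₂ hmA))))
  obtain ⟨z, hz, hzu⟩ := hh.exists_apply_eq_of_succ_le humB
  refine ⟨y + (mA + mB) - z, ?_, a₂ + mA, add_mem ha₂ hmA,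
    (le_min hαa₂ (hαy.trans hymA)).trans (hh.min_le_map_add _ _), ?_⟩
  · exact (lt_succ_of_not_isMax (not_isMax_of_lt hlt)).trans_le
      ((le_min (succ_le_of_lt hlt) hz).trans (hh.min_le_map_sub _ _))
  · rw [map_sub, hzu, map_add, map_add, hyu, map_add]
    abel

theorem exists_sub_map_of_lt_map_add_smul (hh : IsHeight u h) (hP : IsExchangePair u h A B)
    {x a b y m : V} {t : F} (hx : IsMaxOnCoset h (A ⊔ B) x) (hux : u x = a + b) (ha : a ∈ A)
    (hb : b ∈ B) (huy : u y ∈ B) (hxy : h x ≤ h y) (hm : m ∈ A ⊔ B) (ht : t ≠ 0)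
    (hlt : h y < h (y + (m + t • x))) :
    ∃ b₂ ∈ B, h x ≤ h b₂ ∧ succ (succ (h x)) ≤ h (a - u b₂) := by
  have hxm : h x ≤ h m := by
    have hn := hh.map_eq_of_lt_map_add hlt
    rw [add_comm, (hx.smul hh.1 t).map_add hh.1 hm, hh.map_smul_of_ne_zero ht] at hn
    exact (le_min_iff.1 (hn ▸ hxy)).2
  obtain ⟨mA, hmA, mB, hmB, rfl⟩ := mem_sup.1 hm
  have hA : succ (succ (h x)) ≤ h (t • a + u mB) :=
    calc succ (succ (h x)) ≤ succ (h (y + (mA + mB + t • x))) :=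
          succ_le_succ (succ_le_of_lt (hxy.trans_lt hlt))
      _ ≤ h (u (y + (mA + mB + t • x))) := hh.succ_le_map_apply _
      _ = h ((t • a + u mB) + (u y + u mA + t • b)) := by
          simp only [map_add, map_smul, hux, smul_add]; abel_nf
      _ ≤ h (t • a + u mB) := hP.map_add_le_left
          (add_mem (smul_mem _ _ ha) (hP.map_right_le (mem_map_of_mem hmB)))
          (add_mem (add_mem huy (hP.map_left_le (mem_map_of_mem hmA))) (smul_mem _ _ hb))
  refine ⟨-(t⁻¹ • mB), neg_mem (smul_mem _ _ hmB), ?_, ?_⟩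
  · rw [hh.map_neg, hh.map_smul_of_ne_zero (inv_ne_zero ht)]
    exact hxm.trans (hP.map_add_le_right hmA hmB)
  · rwa [show a - u (-(t⁻¹ • mB)) = t⁻¹ • (t • a + u mB) by
      rw [map_neg, map_smul, sub_neg_eq_add, smul_add, inv_smul_smul₀ ht],
      hh.map_smul_of_ne_zero (inv_ne_zero ht)]

theorem exists_isMaxOnCoset_lift (hh : IsHeight u h) (hP : IsExchangePair u h A B)
    {x a b : V} (hx : IsMaxOnCoset h (A ⊔ B) x) (hux : u x = a + b) (ha : a ∈ A) (hb : b ∈ B)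
    {γ : Γ} (hxγ : h x ≤ γ)
    (hγ : succ (h x) ≤ γ ∨ ¬∃ b₂ ∈ B, h x ≤ h b₂ ∧ succ (succ (h x)) ≤ h (a - u b₂))
    (h₀ : ∃ y, γ ≤ h y ∧ ∃ a₂ ∈ A, h x ≤ h a₂ ∧ u y = b + u a₂) :
    ∃ y, (γ ≤ h y ∧ ∃ a₂ ∈ A, h x ≤ h a₂ ∧ u y = b + u a₂) ∧
      IsMaxOnCoset h (A ⊔ B ⊔ span F {x}) y := by
  have := hP.finiteDimensional_sup
  refine hh.exists_isMaxOnCoset_of_exists_lt _ h₀ ?_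
  rintro y ⟨hγy, a₂, ha₂, hxa₂, hyu⟩ hy
  obtain ⟨n, hn, hlt⟩ : ∃ n ∈ A ⊔ B ⊔ span F {x}, h y < h (y + n) := by
    simpa [IsMaxOnCoset] using hy
  obtain ⟨m, hm, t, rfl⟩ := mem_sup_span_singleton_iff.1 hn
  by_cases ht : t = 0
  · rw [ht, zero_smul, add_zero] at hlt
    obtain ⟨y', hyy', hy'⟩ :=
      hP.exists_lt_of_lt_map_add hh hb ha₂ hxa₂ hyu (hxγ.trans hγy) hm hlt
    exact ⟨y', ⟨hγy.trans hyy'.le, hy'⟩, hyy'⟩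
  exfalso
  rcases hγ with hγ | hZ
  · have hle : h y ≤ h x := by
      rw [← hh.map_eq_of_lt_map_add hlt, add_comm, (hx.smul hh.1 t).map_add hh.1 hm,
        hh.map_smul_of_ne_zero ht]
      exact min_le_left _ _
    exact ((max_of_succ_le (hγ.trans (hγy.trans hle))).mono (hxγ.trans hγy)).not_lt hlt
  · have huy : u y ∈ B := hyu ▸ add_mem hb (hP.map_left_le (mem_map_of_mem ha₂))
    exact hZ (hP.exists_sub_map_of_lt_map_add_smul hh hx hux ha hb huy (hxγ.trans hγy) hm ht
      hlt)

theorem exists_mem_sup_of_map_mem (hh : IsHeight u h) (hP : IsExchangePair u h A B) {x : V}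
    (hux : u x ∈ A ⊔ B) :
    ∃ A' B', IsExchangePair u h A' B' ∧ A ≤ A' ∧ B ≤ B' ∧ x ∈ A' ⊔ B' := by
  have := hP.finiteDimensional_sup
  obtain ⟨m₀, hm₀, hx⟩ := hh.exists_isMaxOnCoset_add (A ⊔ B) x
  suffices ∃ A' B', IsExchangePair u h A' B' ∧ A ≤ A' ∧ B ≤ B' ∧ x + m₀ ∈ A' ⊔ B' by
    obtain ⟨A', B', hP', hA, hB, hx'⟩ := this
    exact ⟨A', B', hP', hA, hB, by simpa using sub_mem hx' (sup_le_sup hA hB hm₀)⟩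
  obtain ⟨a, ha, b, hb, hab⟩ := mem_sup.1 (add_mem hux (hP.map_sup_le (mem_map_of_mem hm₀)))
  rw [← map_add] at hab
  generalize x + m₀ = x₀ at hx hab
  by_cases hZ : ∃ b₂ ∈ B, h x₀ ≤ h b₂ ∧ succ (succ (h x₀)) ≤ h (a - u b₂)
  · obtain ⟨b₂, hb₂, hxb₂, hab₂⟩ := hZ
    obtain ⟨y₀, hy₀, hy₀u⟩ := hh.exists_apply_eq_of_succ_le hab₂
    have hx' : IsMaxOnCoset h (B ⊔ A) x₀ := sup_comm A B ▸ hx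
    have hux' : u x₀ = b + a := hab.symm.trans (add_comm a b)
    obtain ⟨y, ⟨hγy, b₂', hb₂', hxb₂', hyu⟩, hy⟩ :=
      hP.symm.exists_isMaxOnCoset_lift hh hx' hux' hb ha (le_succ _) (Or.inl le_rfl)
        ⟨y₀, hy₀, -b₂, neg_mem hb₂, by rwa [hh.map_neg], by rw [hy₀u, map_neg, sub_eq_add_neg]⟩
    obtain ⟨B', A', hP', hB, hA, hmem⟩ := hP.symm.exists_mem_sup_of_isMaxOnCoset_lift hh.1 hx'
      hux' hb ha hb₂' hxb₂' hyu ((le_succ _).trans hγy) hy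
    exact ⟨A', B', hP'.symm, hA, hB, sup_comm B' A' ▸ hmem⟩
  · obtain ⟨y₀, hy₀, hy₀u⟩ := hh.exists_apply_eq_of_succ_le
      ((hab ▸ hh.succ_le_map_apply x₀).trans (hP.map_add_le_right ha hb))
    obtain ⟨y, ⟨hγy, a₂, ha₂, hxa₂, hyu⟩, hy⟩ :=
      hP.exists_isMaxOnCoset_lift hh hx hab.symm ha hb le_rfl (Or.inr hZ)
        ⟨y₀, hy₀, 0, zero_mem _, by simp [hh.map_zero], by simp [hy₀u]⟩
    exact hP.exists_mem_sup_of_isMaxOnCoset_lift hh.1 hx hab.symm ha hb ha₂ hxa₂ hyu hγy hy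

theorem exists_mem_sup (hh : IsHeight u h) (hP : IsExchangePair u h A B) {x : V}
    (hx : ∃ n : ℕ, (u ^ n) x = 0) :
    ∃ A' B', IsExchangePair u h A' B' ∧ A ≤ A' ∧ B ≤ B' ∧ x ∈ A' ⊔ B' := by
  obtain ⟨n, hn⟩ := hx
  induction n generalizing x with
  | zero => exact ⟨A, B, hP, le_rfl, le_rfl, by simp_all⟩
  | succ n ih =>
    obtain ⟨A₁, B₁, hP₁, hA₁, hB₁, hux⟩ :=
      ih (x := u x) (by rwa [← Module.End.mul_apply, ← pow_succ])
    obtain ⟨A₂, B₂, hP₂, hA₂, hB₂, hx⟩ := hP₁.exists_mem_sup_of_map_mem hh hux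
    exact ⟨A₂, B₂, hP₂, hA₁.trans hA₂, hB₁.trans hB₂, hx⟩

end IsExchangePair

namespace Module.End

variable (u : Module.End F V)

noncomputable def heightFiltration (α : Ordinal.{v}) : Submodule F V :=
  ⨅ β : Set.Iio α, (heightFiltration β.1).map u
termination_by α
decreasing_by exact β.2

variable {u}

theorem mem_heightFiltration {α : Ordinal.{v}} {x : V} :
    x ∈ u.heightFiltration α ↔ ∀ β < α, x ∈ (u.heightFiltration β).map u := by
  rw [heightFiltration, mem_iInf]
  exact ⟨fun hx β hβ => hx ⟨β, hβ⟩, fun hx β => hx β.1 β.2⟩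

theorem heightFiltration_le_map {α β : Ordinal.{v}} (hβα : β < α) :
    u.heightFiltration α ≤ (u.heightFiltration β).map u :=
  fun _ hx => mem_heightFiltration.1 hx β hβα

theorem heightFiltration_antitone : Antitone u.heightFiltration := fun _ _ hβα _ hx =>
  mem_heightFiltration.2 fun γ hγ => mem_heightFiltration.1 hx γ (hγ.trans_le hβα)

theorem heightFiltration_le_of_le_map {α : Ordinal.{v}}
    (hα : u.heightFiltration α ≤ (u.heightFiltration α).map u) (β : Ordinal.{v}) :
    u.heightFiltration α ≤ u.heightFiltration β := by
  induction β using WellFoundedLT.induction with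
  | _ β ih => exact fun _ hx => mem_heightFiltration.2 fun γ hγ => map_mono (ih γ hγ) (hα hx)

variable (u) in
theorem exists_heightFiltration_le_map :
    ∃ α, u.heightFiltration α ≤ (u.heightFiltration α).map u := by
  have key : ∀ α β, u.heightFiltration α = u.heightFiltration β → α < β →
      u.heightFiltration α ≤ (u.heightFiltration α).map u := fun α β heq hlt =>
    heq.le.trans ((heightFiltration_antitone (succ_le_of_lt hlt)).trans
      (heightFiltration_le_map (lt_succ α)))
  obtain ⟨α, β, heq, hne⟩ : ∃ α β, u.heightFiltration α = u.heightFiltration β ∧ α ≠ β := by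
    simpa [Function.Injective] using not_injective_of_ordinal u.heightFiltration
  rcases hne.lt_or_gt with hlt | hlt
  · exact ⟨α, key α β heq hlt⟩
  · exact ⟨β, key β α heq.symm hlt⟩

variable (u) in
noncomputable def height (x : V) : WithTop Ordinal.{v} :=
  ⨆ (α : Ordinal.{v}) (_ : x ∈ u.heightFiltration α), (α : WithTop Ordinal.{v})

theorem coe_le_height_iff {α : Ordinal.{v}} {x : V} :
    (α : WithTop Ordinal) ≤ u.height x ↔ x ∈ u.heightFiltration α := by
  refine ⟨fun hle => mem_heightFiltration.2 fun β hβ => ?_, fun hx =>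
    le_iSup₂_of_le (f := fun α (_ : x ∈ u.heightFiltration α) => (α : WithTop Ordinal)) α hx
      le_rfl⟩
  obtain ⟨γ, hγ⟩ := lt_iSup_iff.1 ((WithTop.coe_lt_coe.2 hβ).trans_le hle)
  obtain ⟨hγ, hβγ⟩ := lt_iSup_iff.1 hγ
  exact heightFiltration_le_map (WithTop.coe_lt_coe.1 hβγ) hγ

theorem le_height_iff {γ : WithTop Ordinal.{v}} {x : V} :
    γ ≤ u.height x ↔ ∀ α : Ordinal.{v}, ↑α ≤ γ → x ∈ u.heightFiltration α := by
  simp_rw [← coe_le_height_iff]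
  exact WithTop.forall_coe_le_iff_le.symm

variable (u) in
theorem isHeight_height : IsHeight u u.height where
  map_zero := top_le_iff.1 (le_height_iff.2 fun _ _ => zero_mem _)
  min_le_map_add _ _ := le_height_iff.2 fun _ hα =>
    add_mem (coe_le_height_iff.1 (hα.trans (min_le_left _ _)))
      (coe_le_height_iff.1 (hα.trans (min_le_right _ _)))
  le_map_smul c _ := le_height_iff.2 fun _ hα => smul_mem _ c (coe_le_height_iff.1 hα)
  succ_le_map_apply _ := le_height_iff.2 fun _ hα => mem_heightFiltration.2 fun _ hβ =>
    mem_map_of_mem (coe_le_height_iff.1 (le_of_lt_succ ((WithTop.coe_lt_coe.2 hβ).trans_le hα)))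
  exists_apply_eq_of_succ_le {γ z} hz := by
    classical
    induction γ using WithTop.recTopCoe with
    | top =>
      obtain ⟨α, hα⟩ := u.exists_heightFiltration_le_map
      obtain ⟨c, hc, rfl⟩ :=
        hα (coe_le_height_iff.1 (le_top.trans (succ_top (α := WithTop Ordinal) ▸ hz)))
      exact ⟨c, le_height_iff.2 fun β _ => heightFiltration_le_of_le_map hα β hc, rfl⟩
    | coe α =>
      rw [WithTop.succ_coe, coe_le_height_iff] at hz
      obtain ⟨c, hc, rfl⟩ := heightFiltration_le_map (lt_succ α) hz
      exact ⟨c, coe_le_height_iff.2 hc, rfl⟩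

end Module.End

theorem exists_isCompl_of_forall_exists_mem_sup {ι : Type*} [Countable ι]
    {u : Module.End F V} {v : ι → V} (hv : span F (Set.range v) = ⊤)
    (P : Submodule F V → Submodule F V → Prop)
    (hP : ∀ A B, P A B → Disjoint A B ∧ A.map u ≤ B ∧ B.map u ≤ A) (h₀ : P ⊥ ⊥)
    (hext : ∀ A B, P A B → ∀ i, ∃ A' B', P A' B' ∧ A ≤ A' ∧ B ≤ B' ∧ v i ∈ A' ⊔ B') :
    ∃ V₁ V₂ : Submodule F V, IsCompl V₁ V₂ ∧ V₁.map u ≤ V₂ ∧ V₂.map u ≤ V₁ := by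
  have := Encodable.ofCountable ι
  let 𝒟 : ι → Cofinal {p : Submodule F V × Submodule F V // P p.1 p.2} := fun i =>
    { carrier := {q | v i ∈ q.1.1 ⊔ q.1.2}
      isCofinal := fun p => by
        obtain ⟨A', B', hP', hA, hB, hv⟩ := hext _ _ p.2 i
        exact ⟨⟨(A', B'), hP'⟩, hv, hA, hB⟩ }
  let s := sequenceOfCofinals ⟨(⊥, ⊥), h₀⟩ 𝒟
  have h₁ : Monotone fun n => (s n).1.1 := fun _ _ hmn => (sequenceOfCofinals.monotone _ 𝒟 hmn).1
  have h₂ : Monotone fun n => (s n).1.2 := fun _ _ hmn => (sequenceOfCofinals.monotone _ 𝒟 hmn).2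
  refine ⟨⨆ n, (s n).1.1, ⨆ n, (s n).1.2, ⟨?_, ?_⟩, ?_, ?_⟩
  · rw [h₁.directed_le.disjoint_iSup_left]
    refine fun m => h₂.directed_le.disjoint_iSup_right.2 fun n => ?_
    exact (hP _ _ (s (max m n)).2).1.mono (h₁ (le_max_left m n)) (h₂ (le_max_right m n))
  · rw [codisjoint_iff, eq_top_iff, ← hv, span_le]
    rintro _ ⟨i, rfl⟩
    exact sup_le_sup (le_iSup (fun n => (s n).1.1) _) (le_iSup (fun n => (s n).1.2) _)
      (sequenceOfCofinals.encode_mem _ 𝒟 i)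
  · rw [Submodule.map_iSup]
    exact iSup_mono fun n => (hP _ _ (s n).2).2.1
  · rw [Submodule.map_iSup]
    exact iSup_mono fun n => (hP _ _ (s n).2).2.2

end

/-- Every locally nilpotent endomorphism of a countable-dimensional vector
space has the exchange property. -/
theorem locallyNilpotent_exchange
    (F V : Type*) [Field F] [AddCommGroup V] [Module F V]
    (hdim : ∃ (ι : Type) (_ : Countable ι), Nonempty (Module.Basis ι F V))
    (u : Module.End F V)
    (hln : ∀ x : V, ∃ n : ℕ, (u ^ n) x = 0) :
    ∃ V₁ V₂ : Submodule F V, IsCompl V₁ V₂ ∧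
      Submodule.map u V₁ ≤ V₂ ∧ Submodule.map u V₂ ≤ V₁ := by
  obtain ⟨ι, _, ⟨b⟩⟩ := hdim
  exact exists_isCompl_of_forall_exists_mem_sup b.span_eq (IsExchangePair u u.height)
    (fun _ _ hP => ⟨hP.disjoint, hP.map_left_le, hP.map_right_le⟩) IsExchangePair.bot
    fun _ _ hP i => hP.exists_mem_sup u.isHeight_height (hln (b i))
end

section
/- Let F be a field, let V be an F-vector space of countable dimension, let u be a locally nilpotent endomorphism of V, and let (e_i)_{i∈I} be a basis of V adapted to u, meaning that for every i ∈ I, either u(e_i) = 0 or u(e_i) = e_j for some j ∈ I. Let v be an endomorphism of V such that for every i ∈ I there exists a nonzero scalar λ_i ∈ F with v(e_i) − λ_i·u(e_i) ∈ span{u^k(e_i) : k ≥ 2}. Then v is similar to u. -/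
/-!
Along every `u`-chain `s, u s, u² s, …` of the adapted basis, `v` acts like `λ • u` up to terms
further down the chain, so `v` maps the cyclic span of `s` onto that of `u s` and lowers the
nilpotency index exactly like `u`. Descending the chains (induction on the nilpotency index) one
picks for every `s ∈ {0} ∪ range e` a vector `g s`, leading term a nonzero multiple of `s`, with
`v (g s) = g (u s)`. The map `e i => g (e i)` then intertwines `u` and `v`, and it is triangular
with invertible diagonal with respect to the nilpotency index, hence bijective.
-/

open Submodule Set

namespace Module.Basis

variable {ι R M α : Type*} [Ring R] [AddCommGroup M] [Module R M] [LinearOrder α]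
  (b : Basis ι R M) (h : ι → α) {f : M →ₗ[R] M}
  (hf : ∀ i, ∃ c : R, IsUnit c ∧ f (b i) - c • b i ∈ span R (b '' {j | h j < h i}))
include hf

theorem injective_of_triangular : Function.Injective f := by
  have repr_apply : ∀ {i j : ι} {c : R}, f (b j) - c • b j ∈ span R (b '' {k | h k < h j}) →
      h j ≤ h i → b.repr (f (b j)) i = c * Finsupp.single j 1 i := by
    intro i j c ht hji
    have hi : i ∉ (b.repr (f (b j) - c • b j)).support := fun hi =>
      (b.mem_span_image.1 ht hi).not_ge hji
    rwa [Finsupp.notMem_support_iff, map_sub, map_smul, repr_self, Finsupp.sub_apply,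
      Finsupp.smul_apply, smul_eq_mul, sub_eq_zero] at hi
  rw [← LinearMap.ker_eq_bot, LinearMap.ker_eq_bot']
  intro x hx
  by_contra hx0
  obtain ⟨i, hi, hmax⟩ := (b.repr x).support.exists_max_image h
    (Finsupp.support_nonempty_iff.2 (by simpa using hx0))
  obtain ⟨c, hc, ht⟩ := hf i
  have hfx : b.repr (f x) i = b.repr x i * c := by
    conv_lhs => rw [← b.linearCombination_repr x, Finsupp.linearCombination_apply, Finsupp.sum,
      map_sum, map_sum, Finsupp.finsetSum_apply]
    refine (Finset.sum_eq_single i (fun j hj hji => ?_) (absurd hi)).trans ?_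
    · obtain ⟨c', -, ht'⟩ := hf j
      rw [map_smul, map_smul, Finsupp.smul_apply, repr_apply ht' (hmax j hj),
        Finsupp.single_eq_of_ne hji.symm, mul_zero, smul_zero]
    · rw [map_smul, map_smul, Finsupp.smul_apply, repr_apply ht le_rfl, Finsupp.single_eq_same,
        mul_one, smul_eq_mul]
  rw [hx, map_zero, Finsupp.zero_apply, eq_comm, hc.mul_left_eq_zero] at hfx
  exact Finsupp.mem_support_iff.1 hi hfx

theorem surjective_of_triangular [WellFoundedLT α] : Function.Surjective f := by
  have hb : ∀ i, b i ∈ LinearMap.range f := by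
    intro i
    induction i using (InvImage.wf h wellFounded_lt).induction with
    | _ i ih =>
      obtain ⟨c, hc, ht⟩ := hf i
      have hlow : span R (b '' {j | h j < h i}) ≤ LinearMap.range f :=
        span_le.2 (by rintro _ ⟨j, hj, rfl⟩; exact ih j hj)
      rw [← smul_mem_iff_of_isUnit _ hc, ← sub_sub_cancel (f (b i)) (c • b i)]
      exact sub_mem (LinearMap.mem_range_self f _) (hlow ht)
  rw [← LinearMap.range_eq_top, eq_top_iff, ← b.span_eq, span_le]
  rintro _ ⟨i, rfl⟩
  exact hb i

end Module.Basis

namespace Module.End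

variable {K V : Type*} [Field K] [AddCommGroup V] [Module K V] (u : Module.End K V)

def cyclicSpan (x : V) : Submodule K V := span K (range fun n => (u ^ n) x)

noncomputable def nilIndex (x : V) : ℕ := sInf {n | (u ^ n) x = 0}

variable {u}

theorem mem_cyclicSpan_self (x : V) : x ∈ u.cyclicSpan x :=
  subset_span ⟨0, by simp⟩

@[simp]
theorem cyclicSpan_zero : u.cyclicSpan 0 = ⊥ := by
  simp [cyclicSpan]

theorem cyclicSpan_pow_apply_le (m : ℕ) (x : V) : u.cyclicSpan ((u ^ m) x) ≤ u.cyclicSpan x :=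
  span_mono <| by
    rintro _ ⟨n, rfl⟩
    exact ⟨n + m, by simp only [pow_add, mul_apply]⟩

theorem cyclicSpan_apply_le (x : V) : u.cyclicSpan (u x) ≤ u.cyclicSpan x := by
  simpa using cyclicSpan_pow_apply_le 1 x

theorem cyclicSpan_eq_span_singleton_sup (x : V) :
    u.cyclicSpan x = K ∙ x ⊔ u.cyclicSpan (u x) := by
  refine le_antisymm (span_le.2 ?_) (sup_le ((span_singleton_le_iff_mem _ _).2
    (mem_cyclicSpan_self x)) (cyclicSpan_apply_le x))
  rintro _ ⟨_ | n, rfl⟩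
  · exact mem_sup_left (by simp [mem_span_singleton_self])
  · exact mem_sup_right (subset_span ⟨n, by simp only [pow_succ, mul_apply]⟩)

theorem span_pow_apply_eq_cyclicSpan (k : ℕ) (x : V) :
    span K {y | ∃ n, k ≤ n ∧ y = (u ^ n) x} = u.cyclicSpan ((u ^ k) x) := by
  congr 1
  ext y
  constructor
  · rintro ⟨n, hn, rfl⟩
    exact ⟨n - k, by simp only [← mul_apply, ← pow_add, Nat.sub_add_cancel hn]⟩
  · rintro ⟨n, rfl⟩
    exact ⟨n + k, Nat.le_add_left k n, by rw [pow_add, mul_apply]⟩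

theorem exists_sub_smul_mem_cyclicSpan_apply {x y : V} (hy : y ∈ u.cyclicSpan x)
    (hy' : y ∉ u.cyclicSpan (u x)) : ∃ c : K, c ≠ 0 ∧ y - c • x ∈ u.cyclicSpan (u x) := by
  rw [cyclicSpan_eq_span_singleton_sup, mem_sup] at hy
  obtain ⟨_, hcx, z, hz, rfl⟩ := hy
  obtain ⟨c, rfl⟩ := mem_span_singleton.1 hcx
  refine ⟨c, ?_, by rwa [add_sub_cancel_left]⟩
  rintro rfl
  exact hy' (by rwa [zero_smul, zero_add])

theorem pow_nilIndex_apply {x : V} (hx : ∃ n, (u ^ n) x = 0) : (u ^ u.nilIndex x) x = 0 :=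
  Nat.sInf_mem hx

theorem nilIndex_le {x : V} {n : ℕ} (hx : (u ^ n) x = 0) : u.nilIndex x ≤ n :=
  Nat.sInf_le hx

theorem nilIndex_pow_apply_le {x : V} (hx : ∃ n, (u ^ n) x = 0) (m : ℕ) :
    u.nilIndex ((u ^ m) x) ≤ u.nilIndex x :=
  nilIndex_le <| by rw [← mul_apply, ← pow_add, add_comm, pow_add, mul_apply,
    pow_nilIndex_apply hx, map_zero]

theorem nilIndex_apply_lt {x : V} (hx : ∃ n, (u ^ n) x = 0) (hx0 : x ≠ 0) :
    u.nilIndex (u x) < u.nilIndex x := by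
  obtain ⟨k, hk⟩ : ∃ k, u.nilIndex x = k + 1 :=
    Nat.exists_eq_add_one.2 <| Nat.pos_of_ne_zero fun h0 => hx0 <| by
      simpa [h0] using pow_nilIndex_apply hx
  refine hk ▸ Nat.lt_succ_of_le (nilIndex_le ?_)
  rw [← mul_apply, ← pow_succ, ← hk, pow_nilIndex_apply hx]

-- `Classical.epsilon` returns a junk value when no witness exists; `similarityImage_spec` shows
-- that one does on a `u`-stable set satisfying the perturbation hypothesis.
open Classical in
variable (u) in
noncomputable def similarityImage (v : Module.End K V) (hln : ∀ x : V, ∃ n, (u ^ n) x = 0)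
    (x : V) : V :=
  if u x = 0 then x else
    Classical.epsilon fun y =>
      y ∈ u.cyclicSpan x ∧ y ∉ u.cyclicSpan (u x) ∧ v y = similarityImage v hln (u x)
termination_by u.nilIndex x
decreasing_by exact nilIndex_apply_lt (hln x) fun hx => ‹¬u x = 0› (hx ▸ map_zero u)

@[simp]
theorem similarityImage_zero (v : Module.End K V) (hln : ∀ x : V, ∃ n, (u ^ n) x = 0) :
    u.similarityImage v hln 0 = 0 := by
  rw [similarityImage, if_pos (map_zero u)]

section Perturbation

variable {v : Module.End K V} {S : Set V}

theorem map_cyclicSpan_le (hS : MapsTo u S S) (hv : ∀ s ∈ S, v s ∈ u.cyclicSpan (u s))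
    {s : V} (hs : s ∈ S) : (u.cyclicSpan s).map v ≤ u.cyclicSpan (u s) := by
  rw [cyclicSpan, map_span_le]
  rintro _ ⟨n, rfl⟩
  have hcomm : u ((u ^ n) s) = (u ^ n) (u s) := by
    rw [← mul_apply, ← pow_succ', pow_succ, mul_apply]
  have hmem := hv _ (pow_apply u n s ▸ hS.iterate n hs)
  exact cyclicSpan_pow_apply_le n (u s) (hcomm ▸ hmem)

variable (hv : ∀ s ∈ S, ∃ c : K, c ≠ 0 ∧ v s - c • u s ∈ u.cyclicSpan (u (u s)))
include hv

theorem apply_mem_cyclicSpan_apply {s : V} (hs : s ∈ S) : v s ∈ u.cyclicSpan (u s) := by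
  obtain ⟨c, -, hw⟩ := hv s hs
  rw [← sub_add_cancel (v s) (c • u s)]
  exact add_mem (cyclicSpan_apply_le _ hw) (smul_mem _ _ (mem_cyclicSpan_self _))

theorem cyclicSpan_apply_le_map (hS : MapsTo u S S) {s : V} (hs : s ∈ S)
    (hs₀ : ∃ n, (u ^ n) s = 0) : u.cyclicSpan (u s) ≤ (u.cyclicSpan s).map v := by
  obtain ⟨n, hn⟩ := hs₀
  induction n generalizing s with
  | zero => simp_all
  | succ n ih =>
    have hlow : u.cyclicSpan (u (u s)) ≤ (u.cyclicSpan s).map v :=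
      (ih (hS hs) (by rwa [← mul_apply, ← pow_succ])).trans
        (map_mono (cyclicSpan_apply_le s))
    obtain ⟨c, hc, hw⟩ := hv s hs
    rw [cyclicSpan_eq_span_singleton_sup, sup_le_iff, span_singleton_le_iff_mem,
      ← smul_mem_iff _ hc, ← sub_sub_cancel (v s) (c • u s)]
    exact ⟨sub_mem (mem_map_of_mem (mem_cyclicSpan_self s)) (hlow hw), hlow⟩

theorem similarityImage_spec (hln : ∀ x : V, ∃ n, (u ^ n) x = 0) (hS : MapsTo u S S)
    {s : V} (hs : s ∈ S) :
    u.similarityImage v hln s ∈ u.cyclicSpan s ∧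
      (s ≠ 0 → u.similarityImage v hln s ∉ u.cyclicSpan (u s)) ∧
      v (u.similarityImage v hln s) = u.similarityImage v hln (u s) := by
  induction s using similarityImage.induct u hln with
  | case1 s hu =>
    have hv0 : v s = 0 := by simpa [hu] using apply_mem_cyclicSpan_apply hv hs
    rw [similarityImage, if_pos hu, hu, similarityImage_zero]
    exact ⟨mem_cyclicSpan_self s, by simp, hv0⟩
  | case2 s hu ih =>
    obtain ⟨hmem, hnot, -⟩ := ih (hS hs)
    obtain ⟨y, hy, hvy⟩ := cyclicSpan_apply_le_map hv hS hs (hln s) hmem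
    have hy' : y ∉ u.cyclicSpan (u s) := fun hy' =>
      hnot hu (hvy ▸ map_cyclicSpan_le hS (fun _ => apply_mem_cyclicSpan_apply hv) (hS hs)
        (mem_map_of_mem hy'))
    rw [similarityImage, if_neg hu]
    obtain ⟨h₁, h₂, h₃⟩ := Classical.epsilon_spec (p := fun y => y ∈ u.cyclicSpan s ∧
      y ∉ u.cyclicSpan (u s) ∧ v y = u.similarityImage v hln (u s)) ⟨y, hy, hy', hvy⟩
    exact ⟨h₁, fun _ => h₂, h₃⟩

end Perturbation

theorem cyclicSpan_apply_le_span_basis {ι : Type*} (e : Basis ι K V)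
    (hln : ∀ x : V, ∃ n, (u ^ n) x = 0)
    (he : MapsTo u (insert 0 (range e)) (insert 0 (range e))) (i : ι) :
    u.cyclicSpan (u (e i)) ≤ span K (e '' {j | u.nilIndex (e j) < u.nilIndex (e i)}) := by
  refine span_le.2 ?_
  rintro _ ⟨m, rfl⟩
  have hmem := he.iterate (m + 1) (mem_insert_of_mem _ (mem_range_self i))
  rw [Function.iterate_succ_apply, ← pow_apply] at hmem
  obtain h0 | ⟨j, hj⟩ := hmem
  · simp only [h0, SetLike.mem_coe, zero_mem]
  · refine subset_span ⟨j, ?_, hj⟩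
    calc u.nilIndex (e j) ≤ u.nilIndex (u (e i)) := hj ▸ nilIndex_pow_apply_le (hln _) m
      _ < u.nilIndex (e i) := nilIndex_apply_lt (hln _) (e.ne_zero i)

theorem exists_linearEquiv_intertwining_of_perturbation {ι : Type*} (e : Basis ι K V)
    {v : Module.End K V} (hln : ∀ x : V, ∃ n, (u ^ n) x = 0)
    (he : MapsTo u (insert 0 (range e)) (insert 0 (range e)))
    (hv : ∀ s ∈ insert 0 (range e), ∃ c : K, c ≠ 0 ∧ v s - c • u s ∈ u.cyclicSpan (u (u s))) :
    ∃ φ : V ≃ₗ[K] V, ∀ x : V, φ (u x) = v (φ x) := by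
  have heS : ∀ i, e i ∈ insert 0 (range e) := fun i => mem_insert_of_mem _ (mem_range_self i)
  let φ : V →ₗ[K] V := e.constr K (u.similarityImage v hln ∘ e)
  have hφ : ∀ s ∈ insert 0 (range e), φ s = u.similarityImage v hln s := by
    rintro _ (rfl | ⟨i, rfl⟩) <;> simp [φ]
  have htri : ∀ i, ∃ c : K, IsUnit c ∧
      φ (e i) - c • e i ∈ span K (e '' {j | u.nilIndex (e j) < u.nilIndex (e i)}) := by
    intro i
    obtain ⟨hmem, hnot, -⟩ := similarityImage_spec hv hln he (heS i)
    obtain ⟨c, hc, hsub⟩ := exists_sub_smul_mem_cyclicSpan_apply hmem (hnot (e.ne_zero i))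
    refine ⟨c, hc.isUnit, ?_⟩
    rw [hφ _ (heS i)]
    exact cyclicSpan_apply_le_span_basis e hln he i hsub
  have hcomm : φ ∘ₗ u = v ∘ₗ φ := e.ext fun i => by
    rw [LinearMap.comp_apply, LinearMap.comp_apply, hφ _ (he (heS i)), hφ _ (heS i),
      (similarityImage_spec hv hln he (heS i)).2.2]
  exact ⟨.ofBijective φ ⟨e.injective_of_triangular _ htri, e.surjective_of_triangular _ htri⟩,
    LinearMap.congr_fun hcomm⟩

end Module.End

open Module.End

theorem locallyNilpotent_perturbation_similar_general
    (F V : Type*) [Field F] [AddCommGroup V] [Module F V]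
    (ι : Type) (e : Module.Basis ι F V)
    (u v : Module.End F V)
    (hln : ∀ x : V, ∃ n : ℕ, (u ^ n) x = 0)
    (hadapted : ∀ i : ι, u (e i) = 0 ∨ ∃ j : ι, u (e i) = e j)
    (hv : ∀ i : ι, ∃ lam : F, lam ≠ 0 ∧
      v (e i) - lam • u (e i) ∈
        Submodule.span F {y : V | ∃ k : ℕ, 2 ≤ k ∧ y = (u ^ k) (e i)}) :
    ∃ φ : V ≃ₗ[F] V, ∀ x : V, φ (u x) = v (φ x) := by
  refine exists_linearEquiv_intertwining_of_perturbation e hln ?_ ?_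
  · rintro _ (rfl | ⟨i, rfl⟩)
    · rw [map_zero]
      exact mem_insert 0 _
    · obtain h0 | ⟨j, hj⟩ := hadapted i
      exacts [Or.inl h0, Or.inr ⟨j, hj.symm⟩]
  · rintro _ (rfl | ⟨i, rfl⟩)
    · exact ⟨1, one_ne_zero, by simp⟩
    · simpa only [span_pow_apply_eq_cyclicSpan, pow_two, mul_apply] using hv i

/-- A perturbation lemma: if u is locally nilpotent with an adapted basis
(e_i)_{i ∈ I}, and v(e_i) = λ_i u(e_i) modulo span{u^k(e_i) : k ≥ 2} with
λ_i ≠ 0 for every i, then v is similar to u. -/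
theorem locallyNilpotent_perturbation_similar
    (F V : Type*) [Field F] [AddCommGroup V] [Module F V]
    (ι : Type) [Countable ι] (e : Module.Basis ι F V)
    (u v : Module.End F V)
    (hln : ∀ x : V, ∃ n : ℕ, (u ^ n) x = 0)
    (hadapted : ∀ i : ι, u (e i) = 0 ∨ ∃ j : ι, u (e i) = e j)
    (hv : ∀ i : ι, ∃ lam : F, lam ≠ 0 ∧
      v (e i) - lam • u (e i) ∈
        Submodule.span F {y : V | ∃ k : ℕ, 2 ≤ k ∧ y = (u ^ k) (e i)}) :
    ∃ φ : V ≃ₗ[F] V, ∀ x : V, φ (u x) = v (φ x) :=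
  locallyNilpotent_perturbation_similar_general F V ι e u v hln hadapted hv
end

section
/- Let F be a field, let V be an F-vector space with a basis (e_n)_{n∈ℕ}, and let u be a locally nilpotent endomorphism of V such that the matrix of u with respect to (e_n)_{n∈ℕ} contains at most one nonzero coefficient in each of its columns and in each of its rows; that is, writing u(e_j) = Σ_i c_{i,j} e_i, for every j there is at most one i with c_{i,j} ≠ 0, and for every i there is at most one j with c_{i,j} ≠ 0. Then u is a direct sum of Jordan cells: there is a family (V_k)_{k∈K} of u-invariant subspaces of V with V = ⊕_{k∈K} V_k (internal direct sum) such that for each k the endomorphism of V_k induced by u is a Jordan cell. -/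
/-!
As each column has at most one nonzero entry, `u (e j) = a j • e (s j)` for a map `s` and weights
`a`. The row condition makes `s` injective on the support of `a`, and local nilpotence makes every
orbit `j, s j, s (s j), …` leave that support. The indices whose orbits leave it at the same exit
point are determined by their exit times, which form an initial segment of `ℕ`; on the span of the
corresponding basis vectors `u` is a weighted shift, and rescaling by products of the weights turns
it into a Jordan cell. Distinct exit points give disjoint sets of basis vectors, hence independent
subspaces.
-/

/-- An endomorphism of a vector space is a Jordan cell if it admits a basis
(f_0, …, f_n) (finite case) or (f_m)_{m ∈ ℕ} (infinite case) with w f_0 = 0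
and w f_{i+1} = f_i. -/
def IsJordanCell (F W : Type*) [Field F] [AddCommGroup W] [Module F W]
    (w : Module.End F W) : Prop :=
  (∃ (n : ℕ) (f : Module.Basis (Fin (n + 1)) F W),
      w (f 0) = 0 ∧ ∀ i : Fin n, w (f i.succ) = f i.castSucc) ∨
  (∃ f : Module.Basis ℕ F W, w (f 0) = 0 ∧ ∀ m : ℕ, w (f (m + 1)) = f m)

open Module Finset

section JordanCell

variable {F W : Type*} [Field F] [AddCommGroup W] [Module F W]

lemma inv_prod_range_succ_smul_smul (c : ℕ → F) {m : ℕ} (hc : c m ≠ 0) (x : W) :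
    (∏ i ∈ range (m + 1), c i)⁻¹ • c m • x = (∏ i ∈ range m, c i)⁻¹ • x := by
  rw [prod_range_succ, smul_smul, mul_inv, mul_assoc, inv_mul_cancel₀ hc, mul_one]

lemma IsJordanCell.of_basis_nat {w : End F W} (b : Basis ℕ F W) (c : ℕ → F)
    (hc : ∀ m, c m ≠ 0) (h0 : w (b 0) = 0) (hs : ∀ m, w (b (m + 1)) = c m • b m) :
    IsJordanCell F W w := by
  let r : ℕ → Fˣ := fun m ↦ (Units.mk0 (∏ i ∈ range m, c i) (prod_ne_zero_iff.2 fun i _ ↦ hc i))⁻¹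
  refine Or.inr ⟨b.unitsSMul r, ?_, fun m ↦ ?_⟩
  · rw [Basis.unitsSMul_apply, Units.smul_def, map_smul, h0, smul_zero]
  · simp only [Basis.unitsSMul_apply, map_smul, hs, r, Units.smul_def, Units.val_inv_eq_inv_val,
      Units.val_mk0]
    exact inv_prod_range_succ_smul_smul c (hc m) (b m)

lemma IsJordanCell.of_basis_fin {w : End F W} {n : ℕ} (b : Basis (Fin (n + 1)) F W) (c : ℕ → F)
    (hc : ∀ m < n, c m ≠ 0) (h0 : w (b 0) = 0)
    (hs : ∀ i : Fin n, w (b i.succ) = c i • b i.castSucc) :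
    IsJordanCell F W w := by
  let r : Fin (n + 1) → Fˣ := fun k ↦
    (Units.mk0 (∏ i ∈ range k, c i)
      (prod_ne_zero_iff.2 fun i hi ↦ hc i ((mem_range.1 hi).trans_le (Nat.lt_succ_iff.1 k.is_lt))))⁻¹
  refine Or.inl ⟨n, b.unitsSMul r, ?_, fun i ↦ ?_⟩
  · rw [Basis.unitsSMul_apply, Units.smul_def, map_smul, h0, smul_zero]
  · simp only [Basis.unitsSMul_apply, map_smul, hs, r, Units.smul_def, Units.val_inv_eq_inv_val,
      Units.val_mk0, Fin.val_succ, Fin.val_castSucc]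
    exact inv_prod_range_succ_smul_smul c (hc i i.is_lt) (b i.castSucc)

end JordanCell

section Restrict

variable {F V : Type*} [Field F] [AddCommGroup V] [Module F V]

lemma Submodule.exists_basis_coe_eq {κ : Type*} {W : Submodule F V} {g : κ → V}
    (hli : LinearIndependent F g) (hsp : span F (Set.range g) = W) :
    ∃ b : Basis κ F W, ∀ k, (b k : V) = g k :=
  ⟨(Basis.span hli).map (LinearEquiv.ofEq _ _ hsp), fun k ↦ by simp [Basis.span_apply]⟩

lemma isJordanCell_restrict_of_weightedShift (u : End F V) {W : Submodule F V}
    (hW : ∀ x ∈ W, u x ∈ W) {D : Set ℕ} (hD : IsLowerSet D) (hD0 : 0 ∈ D) (f : ℕ → V)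
    (hli : LinearIndependent F fun m : D ↦ f m) (hsp : Submodule.span F (f '' D) = W)
    (c : ℕ → F) (hc : ∀ m, m + 1 ∈ D → c m ≠ 0) (h0 : u (f 0) = 0)
    (hs : ∀ m, m + 1 ∈ D → u (f (m + 1)) = c m • f m) :
    IsJordanCell F W (u.restrict hW) := by
  rcases hD.eq_univ_or_Iio with rfl | ⟨_ | n, rfl⟩
  · rw [Set.image_univ] at hsp
    obtain ⟨b, hb⟩ := Submodule.exists_basis_coe_eq (g := f)
      (hli.comp _ (Equiv.Set.univ ℕ).symm.injective) hsp
    refine .of_basis_nat b c (fun m ↦ hc m trivial) (Subtype.ext ?_) fun m ↦ Subtype.ext ?_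
    · simp [hb, h0]
    · simp [hb, hs]
  · exact absurd hD0 (Nat.not_lt_zero 0)
  · obtain ⟨b, hb⟩ := Submodule.exists_basis_coe_eq (W := W) (g := fun i : Fin (n + 1) ↦ f i)
      (hli.comp (fun i : Fin (n + 1) ↦ (⟨i, i.is_lt⟩ : Set.Iio (n + 1)))
        fun i j h ↦ Fin.ext (congrArg Subtype.val h))
      (by rwa [Set.range_comp' f, Fin.range_val])
    refine .of_basis_fin b c (fun m hm ↦ hc m (Nat.succ_lt_succ hm)) (Subtype.ext ?_)
      fun i ↦ Subtype.ext ?_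
    · simp [hb, h0]
    · simp [hb, hs i (Nat.succ_lt_succ i.is_lt)]

end Restrict

section ExitTime

open Function Set

variable {ι : Type*} (s : ι → ι) (A : Set ι)

/-- The first time the orbit of `j` leaves `A`; junk value `0` (as `sInf ∅ = 0`) if it never does. -/
noncomputable def exitTime (j : ι) : ℕ := sInf {n | s^[n] j ∉ A}

noncomputable def exitPoint (j : ι) : ι := s^[exitTime s A j] j

/-- `chainTo s A h m` is the index with exit point `h` and exit time `m`, when there is one. -/
noncomputable def chainTo [Nonempty ι] (h : ι) : ℕ → ι :=
  invFunOn (exitTime s A) (exitPoint s A ⁻¹' {h})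

variable {s A} {j : ι}

lemma exitTime_eq_zero (hj : j ∉ A) : exitTime s A j = 0 :=
  Nat.sInf_eq_zero.2 (Or.inl hj)

lemma exitPoint_of_notMem (hj : j ∉ A) : exitPoint s A j = j := by
  rw [exitPoint, exitTime_eq_zero hj, iterate_zero_apply]

lemma exitPoint_notMem (hj : ∃ n, s^[n] j ∉ A) : exitPoint s A j ∉ A :=
  Nat.sInf_mem hj

lemma mem_of_exitTime_ne_zero (hj : exitTime s A j ≠ 0) : j ∈ A :=
  not_not.1 (mt exitTime_eq_zero hj)

lemma exitTime_of_mem (hj : j ∈ A) (hexit : ∃ n, s^[n] j ∉ A) :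
    exitTime s A j = exitTime s A (s j) + 1 := by
  have h1 : 1 ≤ exitTime s A j := Nat.one_le_iff_ne_zero.2 fun h0 ↦ by
    have := exitPoint_notMem hexit
    rw [exitPoint, h0, iterate_zero_apply] at this
    exact this hj
  rw [exitTime, exitTime, ← Nat.sInf_add h1]
  simp only [iterate_succ_apply]

lemma exitPoint_apply_of_mem (hj : j ∈ A) (hexit : ∃ n, s^[n] j ∉ A) :
    exitPoint s A (s j) = exitPoint s A j := by
  rw [exitPoint, exitPoint, exitTime_of_mem hj hexit, iterate_succ_apply]

lemma injOn_exitTime (hA : ∀ j, ∃ n, s^[n] j ∉ A) (hs : InjOn s A) (h : ι) :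
    InjOn (exitTime s A) (exitPoint s A ⁻¹' {h}) := by
  suffices ∀ n j j', exitPoint s A j = exitPoint s A j' → exitTime s A j = n →
      exitTime s A j' = n → j = j' from
    fun j hj j' hj' ht ↦ this _ j j' (hj.trans hj'.symm) rfl ht.symm
  intro n
  induction n with
  | zero =>
    intro j j' hp ht ht'
    rwa [exitPoint, exitPoint, ht, ht', iterate_zero_apply, iterate_zero_apply] at hp
  | succ n ih =>
    intro j j' hp ht ht'
    have hj : j ∈ A := mem_of_exitTime_ne_zero (s := s) (by omega)
    have hj' : j' ∈ A := mem_of_exitTime_ne_zero (s := s) (by omega)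
    refine hs hj hj' (ih (s j) (s j') ?_ ?_ ?_)
    · rwa [exitPoint_apply_of_mem hj (hA j), exitPoint_apply_of_mem hj' (hA j')]
    · linarith [exitTime_of_mem hj (hA j)]
    · linarith [exitTime_of_mem hj' (hA j')]

lemma isLowerSet_exitTime_image (hA : ∀ j, ∃ n, s^[n] j ∉ A) (h : ι) :
    IsLowerSet (exitTime s A '' (exitPoint s A ⁻¹' {h})) := by
  rintro _ m hm ⟨j, hj, rfl⟩
  obtain ⟨k, hk⟩ := Nat.exists_eq_add_of_le hm
  clear hm
  induction k generalizing j with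
  | zero => exact ⟨j, hj, hk⟩
  | succ k ih =>
    have hjA : j ∈ A := mem_of_exitTime_ne_zero (s := s) (by omega)
    refine ih (s j) ?_ ?_
    · rwa [Set.mem_preimage, exitPoint_apply_of_mem hjA (hA j)]
    · linarith [exitTime_of_mem hjA (hA j)]

end ExitTime

section Chain

open Function Set

variable {ι : Type*} [Nonempty ι] {s : ι → ι} {A : Set ι} {h : ι}

lemma chainTo_exitTime (hA : ∀ j, ∃ n, s^[n] j ∉ A) (hs : InjOn s A) {j : ι}
    (hj : exitPoint s A j = h) : chainTo s A h (exitTime s A j) = j :=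
  (injOn_exitTime hA hs h).leftInvOn_invFunOn hj

lemma chainTo_zero (hA : ∀ j, ∃ n, s^[n] j ∉ A) (hs : InjOn s A) (hh : h ∉ A) :
    chainTo s A h 0 = h := by
  simpa [exitTime_eq_zero hh] using chainTo_exitTime hA hs (exitPoint_of_notMem hh)

lemma chainTo_succ (hA : ∀ j, ∃ n, s^[n] j ∉ A) (hs : InjOn s A) {m : ℕ}
    (hm : m + 1 ∈ exitTime s A '' (exitPoint s A ⁻¹' {h})) :
    chainTo s A h (m + 1) ∈ A ∧ s (chainTo s A h (m + 1)) = chainTo s A h m := by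
  set j := chainTo s A h (m + 1)
  obtain ⟨hjh, hjm⟩ : exitPoint s A j = h ∧ exitTime s A j = m + 1 := invFunOn_pos hm
  have hj : j ∈ A := mem_of_exitTime_ne_zero (s := s) (by rw [hjm]; exact m.succ_ne_zero)
  refine ⟨hj, ?_⟩
  have hsj : exitTime s A (s j) = m := by linarith [exitTime_of_mem hj (hA j)]
  rw [← hsj, chainTo_exitTime hA hs ((exitPoint_apply_of_mem hj (hA j)).trans hjh)]

end Chain

lemma LinearIndependent.iSupIndep_span_image_fiber {R M ι κ : Type*} [Ring R] [AddCommGroup M]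
    [Module R M] {v : ι → M} (hv : LinearIndependent R v) (φ : ι → κ) :
    iSupIndep fun k ↦ Submodule.span R (v '' (φ ⁻¹' {k})) := fun k ↦
  (hv.disjoint_span_image (disjoint_compl_right (a := φ ⁻¹' {k}))).mono_right <|
    iSup₂_le fun _ hk ↦ Submodule.span_mono <| Set.image_mono fun _ hi hi' ↦ hk (hi.symm.trans hi')

lemma Module.Basis.exists_eq_repr_smul {R M ι : Type*} [Semiring R] [AddCommMonoid M]
    [Module R M] [Nonempty ι] (e : Basis ι R M) {x : M}
    (hx : ∀ i i', e.repr x i ≠ 0 → e.repr x i' ≠ 0 → i = i') :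
    ∃ i, x = e.repr x i • e i := by
  obtain ⟨i, hi⟩ := Finsupp.card_support_le_one.1 <| Finset.card_le_one.2 fun i hi i' hi' ↦
    hx i i' (Finsupp.mem_support_iff.1 hi) (Finsupp.mem_support_iff.1 hi')
  exact ⟨i, by rw [← e.repr_symm_single, ← hi, LinearEquiv.symm_apply_apply]⟩

lemma Module.End.pow_apply_eq_prod_smul {R M ι : Type*} [CommSemiring R] [AddCommMonoid M]
    [Module R M] (u : End R M) {v : ι → M} {s : ι → ι} {a : ι → R}
    (hu : ∀ j, u (v j) = a j • v (s j)) (n : ℕ) (j : ι) :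
    (u ^ n) (v j) = (∏ k ∈ Finset.range n, a (s^[k] j)) • v (s^[n] j) := by
  induction n generalizing j with
  | zero => simp
  | succ n ih =>
    rw [pow_succ, Module.End.mul_apply, hu, map_smul, ih, smul_smul, Finset.prod_range_succ',
      Function.iterate_succ_apply]
    simp only [Function.iterate_succ_apply, Function.iterate_zero_apply, mul_comm]

section WeightedShift

open Function Set Submodule

universe u

variable {F V : Type*} {ι : Type u} [Field F] [AddCommGroup V] [Module F V] (e : Basis ι F V)
  {u : End F V} {s : ι → ι} {a : ι → F}

lemma exists_iterate_notMem_support (hu : ∀ j, u (e j) = a j • e (s j))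
    (hln : ∀ x, ∃ n, (u ^ n) x = 0) (j : ι) : ∃ n, s^[n] j ∉ support a := by
  obtain ⟨n, hn⟩ := hln (e j)
  rw [u.pow_apply_eq_prod_smul hu, smul_eq_zero, Finset.prod_eq_zero_iff] at hn
  obtain ⟨k, -, hk⟩ := hn.resolve_right (e.ne_zero _)
  exact ⟨k, notMem_support.2 hk⟩

lemma apply_mem_span_exitPoint_fiber (hu : ∀ j, u (e j) = a j • e (s j))
    (hA : ∀ j, ∃ n, s^[n] j ∉ support a) (h : ι) :
    ∀ x ∈ span F (e '' (exitPoint s (support a) ⁻¹' {h})),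
      u x ∈ span F (e '' (exitPoint s (support a) ⁻¹' {h})) := by
  suffices span F (e '' (exitPoint s (support a) ⁻¹' {h})) ≤
      (span F (e '' (exitPoint s (support a) ⁻¹' {h}))).comap u from fun _ hx ↦ this hx
  rw [span_le]
  rintro _ ⟨j, hj, rfl⟩
  rw [SetLike.mem_coe, mem_comap, hu]
  by_cases hja : j ∈ support a
  · exact smul_mem _ _ (subset_span ⟨s j, (exitPoint_apply_of_mem hja (hA j)).trans hj, rfl⟩)
  · rw [notMem_support.1 hja, zero_smul]
    exact zero_mem _

lemma isJordanCell_restrict_span_exitPoint_fiber (hu : ∀ j, u (e j) = a j • e (s j))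
    (hA : ∀ j, ∃ n, s^[n] j ∉ support a) (hs : InjOn s (support a)) {h : ι}
    (hh : h ∉ support a) (hW : ∀ x ∈ span F (e '' (exitPoint s (support a) ⁻¹' {h})),
      u x ∈ span F (e '' (exitPoint s (support a) ⁻¹' {h}))) :
    IsJordanCell F _ (u.restrict hW) := by
  have : Nonempty ι := ⟨h⟩
  have hD0 : 0 ∈ exitTime s (support a) '' (exitPoint s (support a) ⁻¹' {h}) :=
    ⟨h, exitPoint_of_notMem hh, exitTime_eq_zero hh⟩
  refine isJordanCell_restrict_of_weightedShift u hW (isLowerSet_exitTime_image hA h) hD0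
    (e ∘ chainTo s _ h) (e.linearIndependent.comp _ (invFunOn_injOn_image _ _).injective) ?_
    (fun m ↦ a (chainTo s _ h (m + 1))) (fun m hm ↦ (chainTo_succ hA hs hm).1) ?_ fun m hm ↦ ?_
  · rw [image_comp, chainTo, (injOn_exitTime hA hs h).invFunOn_image subset_rfl]
  · rw [comp_apply, chainTo_zero hA hs hh, hu, notMem_support.1 hh, zero_smul]
  · rw [comp_apply, hu, (chainTo_succ hA hs hm).2, comp_apply]

theorem exists_iSupIndep_isJordanCell_of_weightedShift (hu : ∀ j, u (e j) = a j • e (s j))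
    (hs : InjOn s (support a)) (hln : ∀ x, ∃ n, (u ^ n) x = 0) :
    ∃ (K : Type u) (Vk : K → Submodule F V) (hinv : ∀ k, ∀ x ∈ Vk k, u x ∈ Vk k),
      iSupIndep Vk ∧ iSup Vk = ⊤ ∧ ∀ k, IsJordanCell F (Vk k) (u.restrict (hinv k)) := by
  have hA := exists_iterate_notMem_support e hu hln
  refine ⟨↥(support a)ᶜ, fun k ↦ span F (e '' (exitPoint s (support a) ⁻¹' {k.1})),
    fun k ↦ apply_mem_span_exitPoint_fiber e hu hA k.1,
    (e.linearIndependent.iSupIndep_span_image_fiber _).comp Subtype.val_injective, ?_,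
    fun k ↦ isJordanCell_restrict_span_exitPoint_fiber e hu hA hs k.2 _⟩
  rw [eq_top_iff, ← e.span_eq, span_le]
  rintro _ ⟨j, rfl⟩
  exact mem_iSup_of_mem ⟨exitPoint s _ j, exitPoint_notMem (hA j)⟩ (subset_span ⟨j, rfl, rfl⟩)

end WeightedShift

/-- A locally nilpotent endomorphism whose matrix in a basis indexed by ℕ has
at most one nonzero entry in each row and in each column is a direct sum of
Jordan cells. -/
theorem locallyNilpotent_monomial_matrix_direct_sum_jordan
    (F V : Type*) [Field F] [AddCommGroup V] [Module F V]
    (e : Module.Basis ℕ F V) (u : Module.End F V)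
    (hln : ∀ x : V, ∃ n : ℕ, (u ^ n) x = 0)
    (hcol : ∀ j i i' : ℕ, e.repr (u (e j)) i ≠ 0 → e.repr (u (e j)) i' ≠ 0 → i = i')
    (hrow : ∀ i j j' : ℕ, e.repr (u (e j)) i ≠ 0 → e.repr (u (e j')) i ≠ 0 → j = j') :
    ∃ (K : Type) (Vk : K → Submodule F V) (hinv : ∀ k, ∀ x ∈ Vk k, u x ∈ Vk k),
      iSupIndep Vk ∧ iSup Vk = ⊤ ∧
      ∀ k, IsJordanCell F (Vk k) (u.restrict (hinv k)) := by
  choose s hs using fun j ↦ e.exists_eq_repr_smul (hcol j)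
  refine exists_iSupIndep_isJordanCell_of_weightedShift e (a := fun j ↦ e.repr (u (e j)) (s j))
    hs (fun j hj j' hj' hjj' ↦ hrow (s j) j j' hj ?_) hln
  rwa [hjj']
end
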